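/- arXiv:2402.12717 — 7 statements merged into one kernel-verified Lean document; each statement's English description precedes it below -/
import Mathlib

section
/- Let L be a finite poset with a unique minimal element and a unique maximal element. Suppose that for all distinct elements x₀, x₁, x₂ of L such that x₁ and x₂ both cover x₀, the pair x₁, x₂ has a least upper bound in L. Then L is a lattice. -/
/-!
Joins are built by downward induction on a common lower bound `x₀` of `a` and `b`. Pick
covers `x₀ ⋖ y₁ ≤ a` and `x₀ ⋖ y₂ ≤ b`. If `y₁ = y₂`, induct at `y₁`. Otherwise the
hypothesis gives `z = y₁ ⊔ y₂`; induction at `y₁` gives `w = z ⊔ a`, and induction at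
`y₂ ≤ w` gives `v = w ⊔ b`, which is `a ⊔ b`. With the minimum as a common lower bound,
all binary joins exist, so the finite set of common lower bounds of `x` and `y` is
directed; its maximal element is then the greatest one, i.e. the meet of `x` and `y`.
-/

section

variable {L : Type*} [PartialOrder L]

lemma IsLUB.pair_le_iff {a b u c : L} (h : IsLUB {a, b} u) : u ≤ c ↔ a ≤ c ∧ b ≤ c := by
  simp [isLUB_le_iff h, upperBounds_insert]

lemma isLUB_pair_of_le {a b : L} (hab : a ≤ b) : IsLUB {a, b} b := by
  refine ⟨?_, fun c hc ↦ hc (by simp)⟩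
  rintro c (rfl | rfl)
  exacts [hab, le_rfl]

lemma IsLUB.isLUB_pair_of_isLUB_of_isLUB {y₁ y₂ z a w b v : L} (hz : IsLUB {y₁, y₂} z)
    (hw : IsLUB {z, a} w) (hv : IsLUB {w, b} v) (h₁ : y₁ ≤ a) (h₂ : y₂ ≤ b) :
    IsLUB {a, b} v := by
  refine (isLUB_congr ?_).1 hv
  ext c
  simp only [upperBounds_insert, upperBounds_singleton, Set.mem_inter_iff, Set.mem_Ici,
    hw.pair_le_iff, hz.pair_le_iff]
  constructor
  · rintro ⟨⟨_, hac⟩, hbc⟩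
    exact ⟨hac, hbc⟩
  · rintro ⟨hac, hbc⟩
    exact ⟨⟨⟨h₁.trans hac, h₂.trans hbc⟩, hac⟩, hbc⟩

lemma exists_isLUB_pair_of_le_of_le [WellFoundedLT L] [WellFoundedGT L]
    (h : ∀ x₀ x₁ x₂ : L, x₀ ⋖ x₁ → x₀ ⋖ x₂ → x₁ ≠ x₂ → ∃ u, IsLUB {x₁, x₂} u)
    {x₀ a b : L} (ha : x₀ ≤ a) (hb : x₀ ≤ b) : ∃ u, IsLUB {a, b} u := by
  induction x₀ using WellFoundedGT.induction generalizing a b with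
  | _ x₀ ih =>
    rcases ha.eq_or_lt with rfl | ha
    · exact ⟨b, isLUB_pair_of_le hb⟩
    rcases hb.eq_or_lt with rfl | hb
    · rw [Set.pair_comm]
      exact ⟨a, isLUB_pair_of_le ha.le⟩
    obtain ⟨y₁, hx₀y₁, hy₁a⟩ := exists_covBy_le_of_lt ha
    obtain ⟨y₂, hx₀y₂, hy₂b⟩ := exists_covBy_le_of_lt hb
    rcases eq_or_ne y₁ y₂ with rfl | hne
    · exact ih y₁ hx₀y₁.lt hy₁a hy₂b
    obtain ⟨z, hz⟩ := h x₀ y₁ y₂ hx₀y₁ hx₀y₂ hne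
    obtain ⟨w, hw⟩ := ih y₁ hx₀y₁.lt (hz.1 (by simp)) hy₁a
    obtain ⟨v, hv⟩ := ih y₂ hx₀y₂.lt ((hz.1 (by simp)).trans (hw.1 (by simp))) hy₂b
    exact ⟨v, hz.isLUB_pair_of_isLUB_of_isLUB hw hv hy₁a hy₂b⟩

lemma directedOn_lowerBounds (hjoin : ∀ a b : L, ∃ u, IsLUB {a, b} u) (s : Set L) :
    DirectedOn (· ≤ ·) (lowerBounds s) := by
  intro a ha b hb
  obtain ⟨u, hu⟩ := hjoin a b
  exact ⟨u, fun x hx ↦ hu.pair_le_iff.2 ⟨ha hx, hb hx⟩, hu.1 (by simp), hu.1 (by simp)⟩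

lemma exists_isGLB_of_finite_lowerBounds (hjoin : ∀ a b : L, ∃ u, IsLUB {a, b} u)
    {s : Set L} (hfin : (lowerBounds s).Finite) (hne : (lowerBounds s).Nonempty) :
    ∃ u, IsGLB s u := by
  obtain ⟨m, hm⟩ := hfin.exists_maximal hne
  exact ⟨m, hm.prop, (directedOn_lowerBounds hjoin s).is_top_of_is_max hm.prop
    fun _ hb hmb ↦ hm.le_of_ge hb hmb⟩

lemma exists_isBot_of_existsUnique_isMin [WellFoundedLT L] (h : ∃! a : L, IsMin a) :
    ∃ m : L, IsBot m := by
  obtain ⟨m, hm, huniq⟩ := h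
  refine ⟨m, fun x ↦ ?_⟩
  obtain ⟨b, hbx, hb⟩ := exists_minimal_le_of_wellFoundedLT (fun _ ↦ True) x trivial
  exact huniq b (fun c hc ↦ hb.2 trivial hc) ▸ hbx

end

theorem stmt0_general {L : Type*} [PartialOrder L] [Fintype L]
    (hmin : ∃! a : L, IsMin a)
    (h : ∀ x₀ x₁ x₂ : L, x₀ ≠ x₁ → x₀ ≠ x₂ → x₁ ≠ x₂ →
      x₀ ⋖ x₁ → x₀ ⋖ x₂ → ∃ u : L, IsLUB {x₁, x₂} u) :
    ∀ x y : L, (∃ u : L, IsLUB {x, y} u) ∧ (∃ u : L, IsGLB {x, y} u) := by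
  obtain ⟨m, hbot⟩ := exists_isBot_of_existsUnique_isMin hmin
  have hjoin : ∀ a b : L, ∃ u, IsLUB {a, b} u := fun a b ↦
    exists_isLUB_pair_of_le_of_le
      (fun x₀ x₁ x₂ h₁ h₂ hne ↦ h x₀ x₁ x₂ h₁.lt.ne h₂.lt.ne hne h₁ h₂) (hbot a) (hbot b)
  intro x y
  exact ⟨hjoin x y,
    exists_isGLB_of_finite_lowerBounds hjoin (Set.toFinite _) ⟨m, fun z _ ↦ hbot z⟩⟩

/-- **Björner–Edelman–Ziegler lemma.** Let `L` be a finite poset with a unique minimal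
element and a unique maximal element. Suppose that for all distinct `x₀, x₁, x₂` such
that `x₁` and `x₂` both cover `x₀`, the pair `x₁, x₂` has a least upper bound.
Then `L` is a lattice: every pair of elements has a least upper bound and a greatest
lower bound. -/
theorem stmt0 {L : Type*} [PartialOrder L] [Fintype L]
    (hmin : ∃! a : L, IsMin a) (hmax : ∃! a : L, IsMax a)
    (h : ∀ x₀ x₁ x₂ : L, x₀ ≠ x₁ → x₀ ≠ x₂ → x₁ ≠ x₂ →
      x₀ ⋖ x₁ → x₀ ⋖ x₂ → ∃ u : L, IsLUB {x₁, x₂} u) :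
    ∀ x y : L, (∃ u : L, IsLUB {x, y} u) ∧ (∃ u : L, IsGLB {x, y} u) :=
  stmt0_general hmin h
end

section
/- A finite lattice L is meet-semidistributive if and only if for every cover relation x ⋖ y in L, the set {z ∈ L : x ≤ z and y ≰ z} has a unique maximal element. -/
/-- A finite lattice `L` is meet-semidistributive if and only if for every cover
relation `x ⋖ y` in `L`, the set `{z : x ≤ z ∧ y ≰ z}` has a unique maximal element. -/
theorem stmt1 {L : Type*} [Lattice L] [Fintype L] :
    (∀ x y z : L, x ⊓ y = x ⊓ z → x ⊓ y = x ⊓ (y ⊔ z)) ↔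
    (∀ x y : L, x ⋖ y → ∃! m : L, Maximal (fun z => x ≤ z ∧ ¬ y ≤ z) m) := by
  constructor
  · intro sd x y hxy
    have hx : x ≤ x ∧ ¬ y ≤ x := ⟨le_rfl, fun h => hxy.lt.not_ge h⟩
    obtain ⟨m, -, hm⟩ := Finite.exists_le_maximal (p := fun z => x ≤ z ∧ ¬ y ≤ z) hx
    have key : ∀ z : L, x ≤ z → ¬ y ≤ z → y ⊓ z = x := by
      intro z hz hyz
      rcases hxy.eq_or_eq (c := y ⊓ z) (le_inf hxy.le hz) inf_le_left with h | h
      · exact h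
      · exact absurd (h ▸ inf_le_right) hyz
    refine ⟨m, hm, fun m' hm' => ?_⟩
    have h1 : y ⊓ m' = x := key m' hm'.prop.1 hm'.prop.2
    have h2 : y ⊓ m = x := key m hm.prop.1 hm.prop.2
    have h3 : y ⊓ (m' ⊔ m) = x := by
      have := sd y m' m (h1.trans h2.symm)
      rw [h1] at this; exact this.symm
    have hmem : x ≤ m' ⊔ m ∧ ¬ y ≤ m' ⊔ m := by
      refine ⟨le_trans hm.prop.1 le_sup_right, fun h => ?_⟩
      have : y ≤ x := h3 ▸ le_inf le_rfl h
      exact hxy.lt.not_ge this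
    have e1 : m' ⊔ m ≤ m' := hm'.2 hmem le_sup_left
    have e2 : m' ⊔ m ≤ m := hm.2 hmem le_sup_right
    exact le_antisymm (le_sup_left.trans e2) (le_sup_right.trans e1)
  · intro h x y z hyz
    refine le_antisymm (inf_le_inf_left x (le_sup_left)) ?_
    by_contra hlt
    have hab : x ⊓ y < x ⊓ (y ⊔ z) :=
      lt_of_le_of_ne (inf_le_inf_left x le_sup_left) (fun e => hlt (e ▸ le_rfl))
    obtain ⟨c, hc, hcb⟩ := exists_covBy_le_of_lt hab
    obtain ⟨m, hm, huniq⟩ := h _ _ hc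
    have hyS : x ⊓ y ≤ y ∧ ¬ c ≤ y := by
      refine ⟨inf_le_right, fun hcy => ?_⟩
      exact hc.lt.not_ge (le_inf (hcb.trans inf_le_left) hcy)
    have hzS : x ⊓ y ≤ z ∧ ¬ c ≤ z := by
      refine ⟨hyz ▸ inf_le_right, fun hcz => ?_⟩
      exact hc.lt.not_ge (hyz ▸ le_inf (hcb.trans inf_le_left) hcz)
    obtain ⟨my, hymy, hmy⟩ := Finite.exists_le_maximal (p := fun w => x ⊓ y ≤ w ∧ ¬ c ≤ w) hyS
    obtain ⟨mz, hzmz, hmz⟩ := Finite.exists_le_maximal (p := fun w => x ⊓ y ≤ w ∧ ¬ c ≤ w) hzS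
    have hy' : y ≤ m := (huniq my hmy) ▸ hymy
    have hz' : z ≤ m := (huniq mz hmz) ▸ hzmz
    exact hm.prop.2 (hcb.trans (inf_le_right.trans (sup_le hy' hz')))
end

section
/- A finite lattice L is join-semidistributive if and only if for every cover relation x ⋖ y in L, the set {z ∈ L : z ≤ y and z ≰ x} has a unique minimal element. -/
/-!
For a cover `x ⋖ y`, every `z ≤ y` with `z ≰ x` satisfies `x ⊔ z = y`. Join-semidistributivity
therefore makes the set `{z ≤ y, z ≰ x}` closed under meets, so it has only one minimal element.
Conversely, if `x ⊔ (y ⊓ z) < x ⊔ y = x ⊔ z`, pick a cover `c ⋖ x ⊔ y` above `x ⊔ (y ⊓ z)`: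
both `y` and `z` lie in `{w ≤ x ⊔ y, w ≰ c}`, so its unique minimal element is below `y ⊓ z ≤ c`,
which is absurd.
-/

def JoinSemidistrib (L : Type*) [Lattice L] : Prop :=
  ∀ x y z : L, x ⊔ y = x ⊔ z → x ⊔ y = x ⊔ (y ⊓ z)

theorem Minimal.eq_of_inf {L : Type*} [SemilatticeInf L] {P : L → Prop} {a b : L}
    (ha : Minimal P a) (hb : Minimal P b) (hab : P (a ⊓ b)) : a = b :=
  le_antisymm ((ha.2 hab inf_le_left).trans inf_le_right)
    ((hb.2 hab inf_le_right).trans inf_le_left)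

theorem le_of_forall_minimal_eq {L : Type*} [Preorder L] [WellFoundedLT L] {P : L → Prop}
    {m w : L} (hm : ∀ m', Minimal P m' → m' = m) (hw : P w) : m ≤ w := by
  obtain ⟨m', hm'w, hm'⟩ := exists_minimal_le_of_wellFoundedLT P w hw
  exact hm m' hm' ▸ hm'w

theorem CovBy.sup_eq_of_le_of_not_le {L : Type*} [SemilatticeSup L] {x y w : L} (h : x ⋖ y)
    (hwy : w ≤ y) (hwx : ¬ w ≤ x) : x ⊔ w = y :=
  (h.eq_or_eq le_sup_left (sup_le h.le hwy)).resolve_left fun e => hwx (le_sup_right.trans e.le)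

section

variable {L : Type*} [Lattice L]

theorem JoinSemidistrib.not_inf_le_of_covBy (hsd : JoinSemidistrib L) {x y a b : L} (h : x ⋖ y)
    (ha : a ≤ y ∧ ¬ a ≤ x) (hb : b ≤ y ∧ ¬ b ≤ x) : ¬ a ⊓ b ≤ x := by
  intro hab
  have hxa := h.sup_eq_of_le_of_not_le ha.1 ha.2
  have hxb := h.sup_eq_of_le_of_not_le hb.1 hb.2
  have : x ⊔ a = x := by rw [hsd x a b (hxa.trans hxb.symm), sup_eq_left.mpr hab]
  exact h.lt.ne (this.symm.trans hxa)

theorem JoinSemidistrib.existsUnique_minimal_of_covBy [WellFoundedLT L] (hsd : JoinSemidistrib L)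
    {x y : L} (h : x ⋖ y) : ∃! m : L, Minimal (fun z => z ≤ y ∧ ¬ z ≤ x) m := by
  obtain ⟨m, -, hm⟩ := exists_minimal_le_of_wellFoundedLT
    (fun z => z ≤ y ∧ ¬ z ≤ x) y ⟨le_rfl, h.lt.not_ge⟩
  refine ⟨m, hm, fun m' hm' => hm'.eq_of_inf hm ⟨inf_le_left.trans hm'.prop.1, ?_⟩⟩
  exact hsd.not_inf_le_of_covBy h hm'.prop hm.prop

theorem joinSemidistrib_of_existsUnique_minimal [WellFoundedLT L] [IsStronglyCoatomic L]
    (hcov : ∀ x y : L, x ⋖ y → ∃! m : L, Minimal (fun z => z ≤ y ∧ ¬ z ≤ x) m) :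
    JoinSemidistrib L := by
  intro x y z hxyz
  by_contra hne
  obtain ⟨c, hc, hcx⟩ := exists_le_covBy_of_lt
    (lt_of_le_of_ne (sup_le_sup_left inf_le_left x) (Ne.symm hne))
  obtain ⟨m, hm, hm_unique⟩ := hcov c (x ⊔ y) hcx
  have hxc : x ≤ c := le_sup_left.trans hc
  have mem : ∀ w, x ⊔ w = x ⊔ y → w ≤ x ⊔ y ∧ ¬ w ≤ c := fun w hw =>
    ⟨hw ▸ le_sup_right, fun hwc => hcx.lt.not_ge (hw ▸ sup_le hxc hwc)⟩
  have hmy := le_of_forall_minimal_eq hm_unique (mem y rfl)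
  have hmz := le_of_forall_minimal_eq hm_unique (mem z hxyz.symm)
  exact hm.prop.2 ((le_inf hmy hmz).trans (le_sup_right.trans hc))

end

/-- A finite lattice `L` is join-semidistributive if and only if for every cover
relation `x ⋖ y` in `L`, the set `{z : z ≤ y ∧ z ≰ x}` has a unique minimal element. -/
theorem stmt2 {L : Type*} [Lattice L] [Fintype L] :
    (∀ x y z : L, x ⊔ y = x ⊔ z → x ⊔ y = x ⊔ (y ⊓ z)) ↔
    (∀ x y : L, x ⋖ y → ∃! m : L, Minimal (fun z => z ≤ y ∧ ¬ z ≤ x) m) :=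
  ⟨fun hsd _ _ h => JoinSemidistrib.existsUnique_minimal_of_covBy hsd h,
    joinSemidistrib_of_existsUnique_minimal⟩
end

section
/- Let s : S_n → S_n be West's stack-sorting map, defined recursively on words with distinct letters by s(ε) = ε and s(L m R) = s(L) s(R) m, where m is the largest letter of the word L m R. For 1 ≤ a < b ≤ n and σ ∈ S_n, the pair (a,b) is an inversion of s(σ) if and only if there exists c ∈ [n] with b < c such that b precedes c and c precedes a in the one-line notation of σ. -/
/-- Auxiliary fuelled version of West's stack-sorting map on words (lists of naturals
with distinct letters). The fuel always suffices when it is at least the length of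
the word. -/
def ssAux : ℕ → List ℕ → List ℕ
  | 0, _ => []
  | _ + 1, [] => []
  | fuel + 1, l@(_ :: _) =>
      let m := l.foldr max 0
      let i := l.idxOf m
      ssAux fuel (l.take i) ++ ssAux fuel (l.drop (i + 1)) ++ [m]

/-- West's stack-sorting map `s` on words with distinct letters: `s(ε) = ε` and
`s(L m R) = s(L) s(R) m`, where `m` is the largest letter of the word. -/
def ss (l : List ℕ) : List ℕ := ssAux l.length l

/-- The one-line notation of a permutation of `Fin n`, as a word with letters in
`{1, …, n}`: the letter at position `i` (0-indexed) is `w(i) + 1`. -/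
def oneLine {n : ℕ} (w : Equiv.Perm (Fin n)) : List ℕ :=
  List.ofFn fun i => ((w i : ℕ) + 1)

lemma foldr_max_mem (l : List ℕ) (h : l ≠ []) : l.foldr max 0 ∈ l := by
  induction l with
  | nil => simp at h
  | cons x t ih =>
    rcases eq_or_ne t [] with rfl | ht
    · simp
    · simp only [List.foldr_cons]
      rcases max_cases x (t.foldr max 0) with ⟨h1, _⟩ | ⟨h1, _⟩
      · rw [h1]; exact List.mem_cons_self
      · rw [h1]; exact List.mem_cons_of_mem _ (ih ht)

lemma le_foldr_max : ∀ {l : List ℕ} {x : ℕ}, x ∈ l → x ≤ l.foldr max 0 := by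
  intro l
  induction l with
  | nil => intro x h; simp at h
  | cons y t ih =>
    intro x h
    rcases List.mem_cons.mp h with rfl | h
    · exact le_max_left _ _
    · exact le_trans (ih h) (le_max_right _ _)

lemma ssAux_fuel : ∀ f₁ f₂ (l : List ℕ), l.length ≤ f₁ → l.length ≤ f₂ →
    ssAux f₁ l = ssAux f₂ l := by
  intro f₁
  induction f₁ with
  | zero =>
    intro f₂ l h1 _
    rw [List.length_eq_zero_iff.mp (Nat.le_zero.mp h1)]
    cases f₂ <;> rfl
  | succ f ih =>
    intro f₂ l h1 h2
    rcases eq_or_ne l [] with rfl | hne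
    · cases f₂ <;> rfl
    · obtain ⟨x, t, rfl⟩ := List.exists_cons_of_ne_nil hne
      obtain ⟨g, rfl⟩ : ∃ g, f₂ = g + 1 := by
        cases f₂
        · simp at h2
        · exact ⟨_, rfl⟩
      have hm : (x :: t).foldr max 0 ∈ x :: t := foldr_max_mem _ (by simp)
      have hi : (x :: t).idxOf ((x :: t).foldr max 0) < (x :: t).length :=
        List.idxOf_lt_length_iff.mpr hm
      simp only [ssAux]
      have hlen := List.length_cons (a := x) (as := t)
      congr 2
      · apply ih
        · rw [List.length_take]; simp at h1 hi ⊢; omega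
        · rw [List.length_take]; simp at h2 hi ⊢; omega
      · apply ih
        · rw [List.length_drop]; simp at h1 ⊢; omega
        · rw [List.length_drop]; simp at h2 ⊢; omega

lemma ssAux_eq_ss (f : ℕ) (l : List ℕ) (h : l.length ≤ f) : ssAux f l = ss l :=
  ssAux_fuel f l.length l h le_rfl

lemma ss_eq (l : List ℕ) (h : l ≠ []) :
    ss l = ss (l.take (l.idxOf (l.foldr max 0))) ++
      ss (l.drop (l.idxOf (l.foldr max 0) + 1)) ++ [l.foldr max 0] := by
  obtain ⟨x, t, rfl⟩ := List.exists_cons_of_ne_nil h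
  have hm : (x :: t).foldr max 0 ∈ x :: t := foldr_max_mem _ (by simp)
  have hi : (x :: t).idxOf ((x :: t).foldr max 0) < (x :: t).length :=
    List.idxOf_lt_length_iff.mpr hm
  show ssAux (x :: t).length (x :: t) = _
  rw [List.length_cons]
  simp only [ssAux]
  congr 2
  · apply ssAux_eq_ss
    rw [List.length_take]; simp at hi ⊢; omega
  · apply ssAux_eq_ss
    simp only [List.length_drop, List.length_cons]; omega

lemma ss_perm : ∀ N (l : List ℕ), l.length ≤ N → (ss l).Perm l := by
  intro N
  induction N with
  | zero =>
    intro l hl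
    rw [List.length_eq_zero_iff.mp (Nat.le_zero.mp hl)]
    rfl
  | succ N ih =>
    intro l hl
    rcases eq_or_ne l [] with rfl | hne
    · rfl
    · rw [ss_eq l hne]
      set m := l.foldr max 0 with hm_def
      set i := l.idxOf m with hi_def
      have hm : m ∈ l := foldr_max_mem l hne
      have hi : i < l.length := List.idxOf_lt_length_iff.mpr hm
      have h1 : (l.take i).length ≤ N := by rw [List.length_take]; omega
      have h2 : (l.drop (i + 1)).length ≤ N := by rw [List.length_drop]; omega
      have hgi : l[i] = m := List.getElem_idxOf hi
      refine List.Perm.trans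
        (List.Perm.append (List.Perm.append (ih _ h1) (ih _ h2)) (List.Perm.refl [m])) ?_
      rw [List.append_assoc]
      refine List.Perm.trans (List.Perm.append_left _ (List.perm_append_singleton _ _)) ?_
      rw [← hgi, ← List.drop_eq_getElem_cons hi, List.take_append_drop]

lemma main : ∀ N (l : List ℕ), l.length ≤ N → l.Nodup → ∀ a b : ℕ, a ∈ l → b ∈ l → a < b →
    ((ss l).idxOf b < (ss l).idxOf a ↔
      ∃ c ∈ l, b < c ∧ l.idxOf b < l.idxOf c ∧ l.idxOf c < l.idxOf a) := by
  intro N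
  induction N with
  | zero =>
    intro l hl _ a b ha _ _
    rw [List.length_eq_zero_iff.mp (Nat.le_zero.mp hl)] at ha
    simp at ha
  | succ N ih =>
    intro l hlen hnd a b ha hb hab
    rcases eq_or_ne l [] with rfl | hne
    · simp at ha
    set m := l.foldr max 0 with hm_def
    set i := l.idxOf m with hi_def
    have hm : m ∈ l := foldr_max_mem l hne
    have hmax : ∀ x ∈ l, x ≤ m := fun x hx => le_foldr_max hx
    have hi : i < l.length := List.idxOf_lt_length_iff.mpr hm
    set L := l.take i with hL_def
    set R := l.drop (i + 1) with hR_def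
    have hgi : l[i] = m := List.getElem_idxOf hi
    have hl : l = L ++ m :: R := by
      rw [hL_def, hR_def, ← hgi, ← List.drop_eq_getElem_cons hi, List.take_append_drop]
    have hss : ss l = ss L ++ ss R ++ [m] := ss_eq l hne
    have hLlen : L.length ≤ N := by rw [hL_def, List.length_take]; omega
    have hRlen : R.length ≤ N := by rw [hR_def, List.length_drop]; omega
    have hnd' : (L ++ m :: R).Nodup := hl ▸ hnd
    have hndL : L.Nodup := hnd'.of_append_left
    have hndmR : (m :: R).Nodup := hnd'.of_append_right
    have hndR : R.Nodup := (List.nodup_cons.mp hndmR).2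
    have hdisj := List.disjoint_of_nodup_append hnd'
    have hmL : m ∉ L := fun h => hdisj h (List.mem_cons_self)
    have hmR : m ∉ R := (List.nodup_cons.mp hndmR).1
    have hLR : ∀ x ∈ L, x ∉ R := fun x hx hx' => hdisj hx (List.mem_cons_of_mem _ hx')
    have hpL : (ss L).Perm L := ss_perm N L hLlen
    have hpR : (ss R).Perm R := ss_perm N R hRlen
    -- index computations in l
    have idxL : ∀ x ∈ L, l.idxOf x = L.idxOf x := by
      intro x hx
      rw [hl]; exact List.idxOf_append_of_mem hx
    have idxm : l.idxOf m = L.length := by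
      rw [hl, List.idxOf_append_of_notMem hmL, List.idxOf_cons_self, Nat.add_zero]
    have idxR : ∀ x ∈ R, l.idxOf x = L.length + R.idxOf x + 1 := by
      intro x hx
      have hxL : x ∉ L := fun h => hLR x h hx
      have hxm : x ≠ m := fun h => hmR (h ▸ hx)
      rw [hl, List.idxOf_append_of_notMem hxL, List.idxOf_cons_ne _ (Ne.symm hxm)]
      omega
    have idxLlt : ∀ x ∈ L, L.idxOf x < L.length := fun x hx => List.idxOf_lt_length_iff.mpr hx
    have idxRlt : ∀ x ∈ R, R.idxOf x < R.length := fun x hx => List.idxOf_lt_length_iff.mpr hx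
    -- index computations in ss l
    have sidxL : ∀ x ∈ L, (ss l).idxOf x = (ss L).idxOf x := by
      intro x hx
      rw [hss, List.append_assoc, List.idxOf_append_of_mem (hpL.mem_iff.mpr hx)]
    have sidxR : ∀ x ∈ R, (ss l).idxOf x = (ss L).length + (ss R).idxOf x := by
      intro x hx
      have hxL : x ∉ ss L := fun h => hLR x (hpL.mem_iff.mp h) hx
      rw [hss, List.append_assoc, List.idxOf_append_of_notMem hxL,
        List.idxOf_append_of_mem (hpR.mem_iff.mpr hx)]
    have sidxm : (ss l).idxOf m = (ss L).length + (ss R).length := by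
      have h1 : m ∉ ss L ++ ss R := by
        intro h
        rcases List.mem_append.mp h with h | h
        · exact hmL (hpL.mem_iff.mp h)
        · exact hmR (hpR.mem_iff.mp h)
      rw [hss, List.idxOf_append_of_notMem h1, List.idxOf_cons_self, Nat.add_zero,
        List.length_append]
    have sidxLlt : ∀ x ∈ L, (ss L).idxOf x < (ss L).length :=
      fun x hx => List.idxOf_lt_length_iff.mpr (hpL.mem_iff.mpr hx)
    have sidxRlt : ∀ x ∈ R, (ss R).idxOf x < (ss R).length :=
      fun x hx => List.idxOf_lt_length_iff.mpr (hpR.mem_iff.mpr hx)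
    -- case analysis on positions of a, b
    have hb' : b ∈ L ++ m :: R := hl ▸ hb
    have ha' : a ∈ L ++ m :: R := hl ▸ ha
    have ham : a ≠ m := by
      intro h
      have := hmax b hb
      omega
    have haLR : a ∈ L ∨ a ∈ R := by
      rcases List.mem_append.mp ha' with h | h
      · exact Or.inl h
      · rcases List.mem_cons.mp h with h | h
        · exact absurd h ham
        · exact Or.inr h
    rcases List.mem_append.mp hb' with hbL | hbmr
    · -- b ∈ L
      have hbm : b ≠ m := fun h => hmL (h ▸ hbL)
      rcases haLR with haL | haR
      · -- a ∈ L, b ∈ L : use IH on L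
        rw [sidxL a haL, sidxL b hbL, ih L hLlen hndL a b haL hbL hab]
        constructor
        · rintro ⟨c, hcL, hbc, h1, h2⟩
          refine ⟨c, hl ▸ List.mem_append_left _ hcL, hbc, ?_, ?_⟩
          · rw [idxL b hbL, idxL c hcL]; exact h1
          · rw [idxL a haL, idxL c hcL]; exact h2
        · rintro ⟨c, hc, hbc, h1, h2⟩
          have hcL : c ∈ L := by
            rcases List.mem_append.mp (hl ▸ hc) with h | h
            · exact h
            · exfalso
              rcases List.mem_cons.mp h with rfl | h
              · rw [idxm, idxL a haL] at h2
                exact absurd (idxLlt a haL) (by omega)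
              · rw [idxR c h, idxL a haL] at h2
                have := idxLlt a haL
                omega
          refine ⟨c, hcL, hbc, ?_, ?_⟩
          · rw [idxL b hbL, idxL c hcL] at h1; exact h1
          · rw [idxL a haL, idxL c hcL] at h2; exact h2
      · -- a ∈ R, b ∈ L : both sides true, witness c = m
        have hLHS : (ss l).idxOf b < (ss l).idxOf a := by
          rw [sidxL b hbL, sidxR a haR]
          have := sidxLlt b hbL
          omega
        have hRHS : ∃ c ∈ l, b < c ∧ l.idxOf b < l.idxOf c ∧ l.idxOf c < l.idxOf a := by
          refine ⟨m, hm, lt_of_le_of_ne (hmax b hb) hbm, ?_, ?_⟩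
          · rw [idxm, idxL b hbL]; exact idxLlt b hbL
          · rw [idxm, idxR a haR]; omega
        exact iff_of_true hLHS hRHS
    · rcases List.mem_cons.mp hbmr with hbeq | hbR
      · -- b = m : both sides false
        have hLHS : ¬ (ss l).idxOf b < (ss l).idxOf a := by
          rw [hbeq, sidxm]
          rcases haLR with haL | haR
          · rw [sidxL a haL]; have := sidxLlt a haL; omega
          · rw [sidxR a haR]; have := sidxRlt a haR; omega
        have hRHS : ¬ ∃ c ∈ l, b < c ∧ l.idxOf b < l.idxOf c ∧ l.idxOf c < l.idxOf a := by
          rintro ⟨c, hc, hbc, _, _⟩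
          have := hmax c hc
          omega
        exact iff_of_false hLHS hRHS
      · -- b ∈ R
        rcases haLR with haL | haR
        · -- a ∈ L, b ∈ R : both sides false
          have hLHS : ¬ (ss l).idxOf b < (ss l).idxOf a := by
            rw [sidxL a haL, sidxR b hbR]
            have := sidxLlt a haL
            omega
          have hRHS : ¬ ∃ c ∈ l, b < c ∧ l.idxOf b < l.idxOf c ∧
              l.idxOf c < l.idxOf a := by
            rintro ⟨c, hc, hbc, h1, h2⟩
            rw [idxR b hbR] at h1
            rw [idxL a haL] at h2
            have h3 := idxLlt a haL
            omega
          exact iff_of_false hLHS hRHS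
        · -- a ∈ R, b ∈ R : use IH on R
          have heq : (ss l).idxOf b < (ss l).idxOf a ↔
              (ss R).idxOf b < (ss R).idxOf a := by
            rw [sidxR a haR, sidxR b hbR]
            omega
          rw [heq, ih R hRlen hndR a b haR hbR hab]
          constructor
          · rintro ⟨c, hcR, hbc, h1, h2⟩
            refine ⟨c, hl ▸ List.mem_append_right _ (List.mem_cons_of_mem _ hcR), hbc, ?_, ?_⟩
            · rw [idxR b hbR, idxR c hcR]; omega
            · rw [idxR a haR, idxR c hcR]; omega
          · rintro ⟨c, hc, hbc, h1, h2⟩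
            have hcR : c ∈ R := by
              rcases List.mem_append.mp (hl ▸ hc) with h | h
              · exfalso
                rw [idxL c h, idxR b hbR] at h1
                have := idxLlt c h
                omega
              · rcases List.mem_cons.mp h with rfl | h
                · exfalso
                  rw [idxm, idxR b hbR] at h1
                  omega
                · exact h
            refine ⟨c, hcR, hbc, ?_, ?_⟩
            · rw [idxR b hbR, idxR c hcR] at h1; omega
            · rw [idxR a haR, idxR c hcR] at h2; omega

/-- For `1 ≤ a < b ≤ n` and `σ ∈ Sₙ`, the pair `(a, b)` is an inversion of `s(σ)`
(i.e. `b` appears before `a` in the word `s(σ)`) if and only if there exists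
`c ∈ [n]` with `b < c` such that `b` precedes `c` and `c` precedes `a` in the
one-line notation of `σ`. -/
theorem stmt7 (n : ℕ) (σ : Equiv.Perm (Fin n)) (a b : ℕ)
    (ha : 1 ≤ a) (hab : a < b) (hb : b ≤ n) :
    (ss (oneLine σ)).idxOf b < (ss (oneLine σ)).idxOf a ↔
    ∃ c : ℕ, b < c ∧ c ≤ n ∧ (oneLine σ).idxOf b < (oneLine σ).idxOf c ∧
      (oneLine σ).idxOf c < (oneLine σ).idxOf a := by
  have hmem : ∀ x : ℕ, x ∈ oneLine σ ↔ 1 ≤ x ∧ x ≤ n := by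
    intro x
    simp only [oneLine, List.mem_ofFn, Set.mem_range]
    constructor
    · rintro ⟨i, rfl⟩
      exact ⟨Nat.succ_le_succ (Nat.zero_le _), (σ i).isLt⟩
    · rintro ⟨h1, h2⟩
      refine ⟨σ.symm ⟨x - 1, by omega⟩, ?_⟩
      rw [Equiv.apply_symm_apply]
      simp
      omega
  have hnd : (oneLine σ).Nodup := by
    rw [oneLine, List.nodup_ofFn]
    intro i j h
    simp only [add_left_inj] at h
    exact σ.injective (Fin.val_injective h)
  have ha' : a ∈ oneLine σ := (hmem a).mpr ⟨ha, by omega⟩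
  have hb' : b ∈ oneLine σ := (hmem b).mpr ⟨by omega, hb⟩
  rw [main (oneLine σ).length (oneLine σ) le_rfl hnd a b ha' hb' hab]
  constructor
  · rintro ⟨c, hc, hbc, h1, h2⟩
    exact ⟨c, hbc, ((hmem c).mp hc).2, h1, h2⟩
  · rintro ⟨c, hbc, hcn, h1, h2⟩
    exact ⟨c, (hmem c).mpr ⟨by omega, hcn⟩, hbc, h1, h2⟩
end

section
/- Let T be a finite rooted tree, viewed as a poset in which the root is the minimum and each non-root vertex covers exactly one vertex. Define a tube of T to be a subset of vertices inducing a connected subgraph, and a nesting of T to be a collection N of tubes each of cardinality at least 2, containing the full vertex set, such that any two tubes in N are nested or disjoint. Then every maximal (by containment) nesting of a tree with n+1 vertices has exactly n tubes. -/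
/-- The Hasse diagram of a partial order, as a simple graph: `a` and `b` are adjacent
when one covers the other. For a rooted tree poset this is the underlying tree. -/
def hasseGraph (V : Type*) [PartialOrder V] : SimpleGraph V where
  Adj a b := a ⋖ b ∨ b ⋖ a
  symm := ⟨fun a b h => Or.symm h⟩
  loopless := ⟨by
    intro a h
    rcases h with h | h <;> exact absurd h.lt (lt_irrefl a)⟩

/-- A tube of a rooted tree (poset) is a set of vertices inducing a connected subgraph
of the tree (= Hasse diagram). -/
def IsTube {V : Type*} [PartialOrder V] (S : Set V) : Prop :=
  ((hasseGraph V).induce S).Connected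

/-- A nesting of a rooted tree with vertex set `V` is a collection of tubes, each of
cardinality at least `2`, containing the full vertex set, such that any two tubes are
nested or disjoint. -/
def IsNesting {V : Type*} [PartialOrder V] (N : Finset (Set V)) : Prop :=
  (Set.univ ∈ N) ∧ (∀ τ ∈ N, IsTube τ ∧ 2 ≤ τ.ncard) ∧
    ∀ τ ∈ N, ∀ τ' ∈ N, τ ⊆ τ' ∨ τ' ⊆ τ ∨ Disjoint τ τ'

attribute [local instance] Classical.propDecidable

section Aux

variable {V : Type*}

/-- Auxiliary: a nesting of a set `S` with respect to a graph `G`. -/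
def NestOf (G : SimpleGraph V) (S : Set V) (N : Finset (Set V)) : Prop :=
  S ∈ N ∧ (∀ τ ∈ N, τ ⊆ S ∧ (G.induce τ).Connected ∧ 2 ≤ τ.ncard) ∧
    ∀ τ ∈ N, ∀ τ' ∈ N, τ ⊆ τ' ∨ τ' ⊆ τ ∨ Disjoint τ τ'

lemma induce_singleton_connected' (G : SimpleGraph V) (x : V) :
    (G.induce {x}).Connected := by
  rw [SimpleGraph.connected_iff]
  refine ⟨fun a b => ?_, ⟨⟨x, rfl⟩⟩⟩
  have : a = b := Subtype.ext (a.2.trans b.2.symm)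
  exact this ▸ SimpleGraph.Reachable.refl _

lemma cross_edge_aux {α β : Type*} (G' : SimpleGraph α) (g : α → β) :
    ∀ {a b : α}, G'.Walk a b → g a ≠ g b → ∃ u v, G'.Adj u v ∧ g u ≠ g v := by
  intro a b w
  induction w with
  | nil => exact fun h => absurd rfl h
  | @cons a c b hadj p ih =>
    intro h
    by_cases hac : g a = g c
    · exact ih (fun hcb => h (hac.trans hcb))
    · exact ⟨a, c, hadj, hac⟩

lemma exists_part (G : SimpleGraph V) (S : Set V) (N : Finset (Set V)) (hN : NestOf G S N) :
    ∃ part : V → Set V, ∀ x ∈ S,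
      x ∈ part x ∧ part x ⊆ S ∧ (G.induce (part x)).Connected ∧
      (∀ σ ∈ N, σ ≠ S → x ∈ σ → σ ⊆ part x) ∧
      (part x = {x} ∨ (part x ∈ N ∧ part x ≠ S)) := by
  classical
  obtain ⟨hSN, hprops, hlam⟩ := hN
  have hex : ∀ x : V, ∃ R : Set V, x ∈ S →
      x ∈ R ∧ R ⊆ S ∧ (G.induce R).Connected ∧
      (∀ σ ∈ N, σ ≠ S → x ∈ σ → σ ⊆ R) ∧
      (R = {x} ∨ (R ∈ N ∧ R ≠ S)) := by
    intro x
    by_cases h : (N.filter (fun σ => x ∈ σ ∧ σ ≠ S)).Nonempty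
    · obtain ⟨M, hmem, hmaxM⟩ := Finset.exists_maximal h
      rw [Finset.mem_filter] at hmem
      refine ⟨M, fun _ => ⟨hmem.2.1, (hprops _ hmem.1).1, (hprops _ hmem.1).2.1, ?_,
        Or.inr ⟨hmem.1, hmem.2.2⟩⟩⟩
      intro σ hσ hσS hxσ
      have hσF : σ ∈ N.filter (fun σ => x ∈ σ ∧ σ ≠ S) :=
        Finset.mem_filter.mpr ⟨hσ, hxσ, hσS⟩
      rcases hlam _ hmem.1 σ hσ with h1 | h1 | h1
      · by_contra hc
        exact hc (hmaxM hσF h1)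
      · exact h1
      · exact absurd hxσ (Set.disjoint_left.mp h1 hmem.2.1)
    · refine ⟨{x}, fun hx => ⟨rfl, Set.singleton_subset_iff.mpr hx,
        induce_singleton_connected' G x, ?_, Or.inl rfl⟩⟩
      intro σ hσ hσS hxσ
      exact absurd ⟨σ, Finset.mem_filter.mpr ⟨hσ, hxσ, hσS⟩⟩ h
  choose part hpart using hex
  exact ⟨part, hpart⟩

lemma key_nesting [Fintype V] (G : SimpleGraph V) :
    ∀ m : ℕ, ∀ S : Set V, ∀ N : Finset (Set V), NestOf G S N →
      (∀ σ : Set V, NestOf G S (insert σ N) → σ ∈ N) → S.ncard = m → N.card + 1 = m := by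
  intro m
  induction m using Nat.strong_induction_on with
  | _ m IH =>
  intro S N hN hmaxi hm
  classical
  obtain ⟨part, hpart⟩ := exists_part G S N hN
  obtain ⟨hSN, hprops, hlam⟩ := hN
  have hSfin : S.Finite := Set.toFinite S
  have hS2 : 2 ≤ S.ncard := (hprops S hSN).2.2
  have hne2 : ∀ τ ∈ N, τ.Nonempty := by
    intro τ hτ
    have h2 := (hprops τ hτ).2.2
    rw [Set.nonempty_iff_ne_empty]
    rintro rfl
    simp [Set.ncard_empty] at h2
  have hpeq : ∀ x ∈ S, ∀ y ∈ S, y ∈ part x → part y = part x := by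
    intro x hx y hy hyx
    obtain ⟨hx1, hx2, hx3, hx4, hx5⟩ := hpart x hx
    obtain ⟨hy1, hy2, hy3, hy4, hy5⟩ := hpart y hy
    rcases hx5 with h | ⟨hPN, hPS⟩
    · rw [h, Set.mem_singleton_iff] at hyx
      rw [hyx]
    · have h1 : part x ⊆ part y := hy4 _ hPN hPS hyx
      rcases hy5 with h | ⟨hQN, hQS⟩
      · exfalso
        have h2 := (hprops _ hPN).2.2
        rw [h] at h1
        have h3 : (part x).ncard ≤ ({y} : Set V).ncard :=
          Set.ncard_le_ncard h1 (Set.finite_singleton y)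
        rw [Set.ncard_singleton] at h3
        omega
      · exact Set.Subset.antisymm (hx4 _ hQN hQS (h1 hx1)) h1
  have hpdisj : ∀ x ∈ S, ∀ y ∈ S, part x ≠ part y → Disjoint (part x) (part y) := by
    intro x hx y hy hne
    rw [Set.disjoint_left]
    intro z hzx hzy
    have hzS : z ∈ S := (hpart x hx).2.1 hzx
    exact hne ((hpeq x hx z hzS hzx).symm.trans (hpeq y hy z hzS hzy))
  have habs : ∀ σ ∈ N, σ ≠ S → ∀ z ∈ σ, σ ⊆ part z := by
    intro σ hσ hσS z hz
    have hzS : z ∈ S := (hprops σ hσ).1 hz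
    exact (hpart z hzS).2.2.2.1 σ hσ hσS hz
  obtain ⟨x, hxS⟩ : S.Nonempty := by
    rw [← Set.ncard_pos hSfin]; omega
  have hPxS : part x ≠ S := by
    rcases (hpart x hxS).2.2.2.2 with h | ⟨_, h⟩
    · intro hc
      rw [h] at hc
      rw [← hc, Set.ncard_singleton] at hS2
      omega
    · exact h
  obtain ⟨y, hyS, hynx⟩ : ∃ y ∈ S, y ∉ part x :=
    Set.exists_of_ssubset (HasSubset.Subset.ssubset_of_ne (hpart x hxS).2.1 hPxS)
  have hfxy : part y ≠ part x := fun hc => hynx (hc ▸ (hpart y hyS).1)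
  by_cases hcase : ∀ z ∈ S, part z = part x ∨ part z = part y
  · -- exactly two parts: decompose
    have hx1 := (hpart x hxS).1
    have hy1 := (hpart y hyS).1
    have hdisjPQ : Disjoint (part x) (part y) := hpdisj x hxS y hyS (Ne.symm hfxy)
    have hSPQ : S = part x ∪ part y := by
      apply Set.Subset.antisymm
      · intro z hz
        rcases hcase z hz with h | h
        · exact Set.mem_union_left _ (h ▸ (hpart z hz).1)
        · exact Set.mem_union_right _ (h ▸ (hpart z hz).1)
      · exact Set.union_subset (hpart x hxS).2.1 (hpart y hyS).2.1
    have hQS : part y ≠ S := by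
      intro hc
      have hx' : x ∈ part y := hc ▸ hxS
      exact hfxy (hpeq y hyS x hxS hx').symm
    -- generic claim for a part
    have main : ∀ w ∈ S, (∀ τ ∈ N, τ ≠ S → τ ⊆ part w ∨ Disjoint τ (part w)) → part w ≠ S →
        (N.filter (fun τ => τ ⊆ part w)).card + 1 = (part w).ncard := by
      intro w hwS hsplit hwne
      obtain ⟨hw1, hw2, hw3, hw4, hw5⟩ := hpart w hwS
      rcases hw5 with hsing | ⟨hRN, hRS⟩
      · have hempty : N.filter (fun τ => τ ⊆ part w) = ∅ := by
          rw [Finset.filter_eq_empty_iff]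
          intro τ hτ hc
          have h2 := (hprops τ hτ).2.2
          rw [hsing] at hc
          have h3 : τ.ncard ≤ ({w} : Set V).ncard :=
            Set.ncard_le_ncard hc (Set.finite_singleton w)
          rw [Set.ncard_singleton] at h3
          omega
        rw [hempty, hsing, Set.ncard_singleton]
        simp
      · have hssub : part w ⊂ S := HasSubset.Subset.ssubset_of_ne hw2 hRS
        have hlt : (part w).ncard < m := hm ▸ Set.ncard_lt_ncard hssub hSfin
        refine IH _ hlt (part w) _ ⟨?_, ?_, ?_⟩ ?_ rfl
        · exact Finset.mem_filter.mpr ⟨hRN, subset_rfl⟩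
        · intro τ hτ
          rw [Finset.mem_filter] at hτ
          exact ⟨hτ.2, (hprops τ hτ.1).2.1, (hprops τ hτ.1).2.2⟩
        · intro τ hτ τ' hτ'
          rw [Finset.mem_filter] at hτ hτ'
          exact hlam _ hτ.1 _ hτ'.1
        · intro σ hσ
          obtain ⟨_, hprops', hlam'⟩ := hσ
          have hσR : σ ⊆ part w := (hprops' σ (Finset.mem_insert_self _ _)).1
          have hσN : σ ∈ N := by
            apply hmaxi
            refine ⟨Finset.mem_insert_of_mem hSN, ?_, ?_⟩
            · intro τ hτ
              rcases Finset.mem_insert.mp hτ with rfl | hτ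
              · exact ⟨hσR.trans hw2, (hprops' τ (Finset.mem_insert_self _ _)).2⟩
              · exact hprops τ hτ
            · have hcomp : ∀ τ ∈ N, σ ⊆ τ ∨ τ ⊆ σ ∨ Disjoint σ τ := by
                intro τ hτ
                by_cases hS' : τ = S
                · left; rw [hS']; exact hσR.trans hw2
                · rcases hsplit τ hτ hS' with hsub | hdis
                  · exact hlam' σ (Finset.mem_insert_self _ _) τ
                      (Finset.mem_insert_of_mem (Finset.mem_filter.mpr ⟨hτ, hsub⟩))
                  · right; right; exact hdis.symm.mono_left hσR
              intro τ hτ τ' hτ'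
              rcases Finset.mem_insert.mp hτ with rfl | hτn
              · rcases Finset.mem_insert.mp hτ' with rfl | hτ'n
                · exact Or.inl subset_rfl
                · exact hcomp τ' hτ'n
              · rcases Finset.mem_insert.mp hτ' with rfl | hτ'n
                · rcases hcomp τ hτn with h | h | h
                  · exact Or.inr (Or.inl h)
                  · exact Or.inl h
                  · exact Or.inr (Or.inr h.symm)
                · exact hlam τ hτn τ' hτ'n
          exact Finset.mem_filter.mpr ⟨hσN, hσR⟩
    have hsplit' : ∀ w ∈ S, (∀ z ∈ S, part z = part w ∨ Disjoint (part z) (part w)) →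
        ∀ τ ∈ N, τ ≠ S → τ ⊆ part w ∨ Disjoint τ (part w) := by
      intro w hwS hz τ hτ hne
      obtain ⟨t, ht⟩ := hne2 τ hτ
      have htS : t ∈ S := (hprops τ hτ).1 ht
      have h1 := habs τ hτ hne t ht
      rcases hz t htS with h | h
      · left; exact h ▸ h1
      · right; exact h.mono_left h1
    have hsplitx : ∀ τ ∈ N, τ ≠ S → τ ⊆ part x ∨ Disjoint τ (part x) := by
      apply hsplit' x hxS
      intro z hzS
      rcases hcase z hzS with h | h
      · exact Or.inl h
      · exact Or.inr (h ▸ hpdisj y hyS x hxS hfxy)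
    have hsplity : ∀ τ ∈ N, τ ≠ S → τ ⊆ part y ∨ Disjoint τ (part y) := by
      apply hsplit' y hyS
      intro z hzS
      rcases hcase z hzS with h | h
      · exact Or.inr (h ▸ hpdisj x hxS y hyS (Ne.symm hfxy))
      · exact Or.inl h
    have e1 := main x hxS hsplitx hPxS
    have e2 := main y hyS hsplity hQS
    have hNdec : N = insert S (N.filter (fun τ => τ ⊆ part x) ∪ N.filter (fun τ => τ ⊆ part y)) := by
      apply Finset.ext
      intro τ
      constructor
      · intro hτ
        by_cases hS' : τ = S
        · exact hS' ▸ Finset.mem_insert_self _ _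
        · apply Finset.mem_insert_of_mem
          obtain ⟨t, ht⟩ := hne2 τ hτ
          have htS : t ∈ S := (hprops τ hτ).1 ht
          have h1 := habs τ hτ hS' t ht
          rcases hcase t htS with h | h
          · exact Finset.mem_union_left _ (Finset.mem_filter.mpr ⟨hτ, h ▸ h1⟩)
          · exact Finset.mem_union_right _ (Finset.mem_filter.mpr ⟨hτ, h ▸ h1⟩)
      · intro hτ
        rcases Finset.mem_insert.mp hτ with rfl | hτ
        · exact hSN
        · rcases Finset.mem_union.mp hτ with h | h
          · exact (Finset.mem_filter.mp h).1
          · exact (Finset.mem_filter.mp h).1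
    have hSnot : S ∉ N.filter (fun τ => τ ⊆ part x) ∪ N.filter (fun τ => τ ⊆ part y) := by
      intro hc
      rcases Finset.mem_union.mp hc with h | h
      · exact hynx ((Finset.mem_filter.mp h).2 hyS)
      · have hx' : x ∈ part y := (Finset.mem_filter.mp h).2 hxS
        exact hfxy (hpeq y hyS x hxS hx').symm
    have hdisjN : Disjoint (N.filter (fun τ => τ ⊆ part x)) (N.filter (fun τ => τ ⊆ part y)) := by
      rw [Finset.disjoint_left]
      intro τ hτP hτQ
      obtain ⟨t, ht⟩ := hne2 τ (Finset.mem_filter.mp hτP).1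
      exact Set.disjoint_left.mp hdisjPQ ((Finset.mem_filter.mp hτP).2 ht)
        ((Finset.mem_filter.mp hτQ).2 ht)
    have hcard : N.card = (N.filter (fun τ => τ ⊆ part x)).card +
        (N.filter (fun τ => τ ⊆ part y)).card + 1 := by
      conv_lhs => rw [hNdec]
      rw [Finset.card_insert_of_notMem hSnot, Finset.card_union_of_disjoint hdisjN]
    have hcardS : S.ncard = (part x).ncard + (part y).ncard := by
      rw [hSPQ]
      exact Set.ncard_union_eq hdisjPQ (Set.toFinite _) (Set.toFinite _)
    omega
  · -- at least three parts: contradiction with maximality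
    exfalso
    push_neg at hcase
    obtain ⟨z, hzS, hzx, hzy⟩ := hcase
    have hScon := (hprops S hSN).2.1
    obtain ⟨w⟩ := hScon.preconnected ⟨x, hxS⟩ ⟨y, hyS⟩
    obtain ⟨u, v, hadj, hune⟩ := cross_edge_aux _ (fun a : S => part a.1) w
      (fun hc => hfxy hc.symm)
    have hadjG : G.Adj u.1 v.1 := hadj
    have huP : u.1 ∈ part u.1 := (hpart u.1 u.2).1
    have hvQ : v.1 ∈ part v.1 := (hpart v.1 v.2).1
    have hdisjPQ : Disjoint (part u.1) (part v.1) := hpdisj u.1 u.2 v.1 v.2 hune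
    have hw0 : ∃ w0 ∈ S, part w0 ≠ part u.1 ∧ part w0 ≠ part v.1 := by
      by_cases h1 : part x = part u.1
      · by_cases h2 : part y = part v.1
        · exact ⟨z, hzS, fun hc => hzx (hc.trans h1.symm), fun hc => hzy (hc.trans h2.symm)⟩
        · by_cases h3 : part y = part u.1
          · exact absurd (h3.trans h1.symm) hfxy
          · exact ⟨y, hyS, h3, h2⟩
      · by_cases h2 : part x = part v.1
        · by_cases h3 : part y = part u.1
          · exact ⟨z, hzS, fun hc => hzy (hc.trans h3.symm), fun hc => hzx (hc.trans h2.symm)⟩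
          · exact ⟨y, hyS, h3, fun hc => hfxy (hc.trans h2.symm)⟩
        · exact ⟨x, hxS, h1, h2⟩
    obtain ⟨w0, hw0S, hw0P, hw0Q⟩ := hw0
    have hσcon : (G.induce (part u.1 ∪ part v.1)).Connected :=
      SimpleGraph.connected_induce_union (hpart u.1 u.2).2.2.1.preconnected (hpart v.1 v.2).2.2.1.preconnected
        huP hvQ hadjG
    have hσS : part u.1 ∪ part v.1 ⊆ S :=
      Set.union_subset (hpart u.1 u.2).2.1 (hpart v.1 v.2).2.1
    have hw0σ : w0 ∉ part u.1 ∪ part v.1 := by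
      intro hc
      rcases hc with hc | hc
      · exact hw0P (hpeq u.1 u.2 w0 hw0S hc)
      · exact hw0Q (hpeq v.1 v.2 w0 hw0S hc)
    have hσ2 : 2 ≤ (part u.1 ∪ part v.1).ncard := by
      rw [show (2 : ℕ) = 1 + 1 from rfl, Nat.add_one_le_iff,
        Set.one_lt_ncard_iff (Set.toFinite _)]
      exact ⟨u.1, v.1, Set.mem_union_left _ huP, Set.mem_union_right _ hvQ, hadjG.ne⟩
    have hcomp : ∀ τ ∈ N, (part u.1 ∪ part v.1) ⊆ τ ∨ τ ⊆ (part u.1 ∪ part v.1) ∨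
        Disjoint (part u.1 ∪ part v.1) τ := by
      intro τ hτ
      by_cases hS' : τ = S
      · left; rw [hS']; exact hσS
      · obtain ⟨t, ht⟩ := hne2 τ hτ
        have htS : t ∈ S := (hprops τ hτ).1 ht
        have h1 := habs τ hτ hS' t ht
        by_cases hp : part t = part u.1
        · right; left; exact h1.trans (hp ▸ Set.subset_union_left)
        · by_cases hq : part t = part v.1
          · right; left; exact h1.trans (hq ▸ Set.subset_union_right)
          · right; right
            have d1 : Disjoint (part u.1) (part t) := hpdisj u.1 u.2 t htS (fun hc => hp hc.symm)
            have d2 : Disjoint (part v.1) (part t) := hpdisj v.1 v.2 t htS (fun hc => hq hc.symm)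
            exact ((Set.disjoint_union_left).mpr ⟨d1, d2⟩).mono_right h1
    have hnest : NestOf G S (insert (part u.1 ∪ part v.1) N) := by
      refine ⟨Finset.mem_insert_of_mem hSN, ?_, ?_⟩
      · intro τ hτ
        rcases Finset.mem_insert.mp hτ with rfl | hτ
        · exact ⟨hσS, hσcon, hσ2⟩
        · exact hprops τ hτ
      · intro τ hτ τ' hτ'
        rcases Finset.mem_insert.mp hτ with rfl | hτn
        · rcases Finset.mem_insert.mp hτ' with rfl | hτ'n
          · exact Or.inl subset_rfl
          · rcases hcomp τ' hτ'n with h | h | h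
            · exact Or.inl h
            · exact Or.inr (Or.inl h)
            · exact Or.inr (Or.inr h)
        · rcases Finset.mem_insert.mp hτ' with rfl | hτ'n
          · rcases hcomp τ hτn with h | h | h
            · exact Or.inr (Or.inl h)
            · exact Or.inl h
            · exact Or.inr (Or.inr h.symm)
          · exact hlam τ hτn τ' hτ'n
    have hσN : (part u.1 ∪ part v.1) ∈ N := hmaxi _ hnest
    have hσneS : (part u.1 ∪ part v.1) ≠ S := by intro h; rw [h] at hw0σ; exact hw0σ hw0S
    have h1 : (part u.1 ∪ part v.1) ⊆ part u.1 :=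
      habs _ hσN hσneS u.1 (Set.mem_union_left _ huP)
    have h2 : v.1 ∈ part u.1 := h1 (Set.mem_union_right _ hvQ)
    exact hune (hpeq u.1 u.2 v.1 v.2 h2).symm

end Aux

/-- Every maximal (by containment) nesting of a rooted tree with `n + 1` vertices
(viewed as a poset in which the root is the minimum and every non-root vertex covers
exactly one vertex) has exactly `n` tubes. -/
theorem stmt10 {V : Type*} [Fintype V] [PartialOrder V] (n : ℕ)
    (hcard : Fintype.card V = n + 1)
    (hroot : ∃ r : V, ∀ v : V, r ≤ v)
    (htree : ∀ v : V, ¬ IsMin v → ∃! u : V, u ⋖ v)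
    (N : Finset (Set V)) (hN : IsNesting N)
    (hmax : ∀ N' : Finset (Set V), IsNesting N' → N ⊆ N' → N' = N) :
    N.card = n := by
  have hNest : NestOf (hasseGraph V) Set.univ N :=
    ⟨hN.1, fun τ hτ => ⟨Set.subset_univ τ, (hN.2.1 τ hτ).1, (hN.2.1 τ hτ).2⟩, hN.2.2⟩
  have hmaxi : ∀ σ : Set V, NestOf (hasseGraph V) Set.univ (insert σ N) → σ ∈ N := by
    intro σ hσ
    have hins : IsNesting (insert σ N) :=
      ⟨Finset.mem_insert_of_mem hN.1,
        fun τ hτ => ⟨(hσ.2.1 τ hτ).2.1, (hσ.2.1 τ hτ).2.2⟩, hσ.2.2⟩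
    have h2 := hmax _ hins (Finset.subset_insert _ _)
    rw [← h2]
    exact Finset.mem_insert_self _ _
  have hkey := key_nesting (hasseGraph V) (n + 1) Set.univ N hNest hmaxi
    (by rw [Set.ncard_univ, Nat.card_eq_fintype_card, hcard])
  omega
end

section
/- Fix 1 ≤ d ≤ n−1. The join-irreducible elements of the interval of the right weak order on S_n from the identity to the permutation λ_max = (d+1)(d+2)⋯n 1 2 ⋯ d are exactly the permutations of the form 1 2 ⋯ a (d+1)(d+2) ⋯ b (a+1)(a+2) ⋯ d (b+1)(b+2) ⋯ n, where 0 ≤ a ≤ d−1 and d+1 ≤ b ≤ n; in particular, this interval has exactly d(n−d) join-irreducible elements. -/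
/-- The set of inversions of a permutation `w` of `Fin n` (0-indexed): pairs `(i, j)`
of values with `i < j` such that `j` appears before `i` in one-line notation. -/
def Inversions {n : ℕ} (w : Equiv.Perm (Fin n)) : Set (Fin n × Fin n) :=
  {p | p.1 < p.2 ∧ w.symm p.2 < w.symm p.1}

/-- The right weak order on `Sₙ`: containment of inversion sets. -/
def WeakLE {n : ℕ} (u v : Equiv.Perm (Fin n)) : Prop :=
  Inversions u ⊆ Inversions v

/-- The strict right weak order. -/
def WeakLT {n : ℕ} (u v : Equiv.Perm (Fin n)) : Prop :=
  WeakLE u v ∧ u ≠ v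

/-- The permutation `λ_max` with one-line notation `(d+1) (d+2) ⋯ n 1 2 ⋯ d`, i.e.
(0-indexed) the rotation `i ↦ i + d (mod n)`. -/
def lamMax (n d : ℕ) : Equiv.Perm (Fin n) := (finRotate n) ^ d

/-- `w` is a join-irreducible element of the interval `[id, λ_max]` of the right weak
order on `Sₙ`: it lies in the interval and covers exactly one element of the interval. -/
def IntervalJoinIrred (n d : ℕ) (w : Equiv.Perm (Fin n)) : Prop :=
  WeakLE w (lamMax n d) ∧
  ∃! u : Equiv.Perm (Fin n), WeakLE u (lamMax n d) ∧ WeakLT u w ∧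
    ∀ z : Equiv.Perm (Fin n), WeakLE z (lamMax n d) → WeakLT u z → WeakLT z w → False

lemma aux_sm {k n : ℕ} {f g : Fin k → Fin n} (hf : StrictMono f) (hg : StrictMono g)
    (h : Set.range f = Set.range g) : f = g := by
  have key : ∀ m : ℕ, ∀ p : Fin k, (p : ℕ) = m → f p = g p := by
    intro m
    induction m using Nat.strong_induction_on with
    | _ m ih =>
      intro p hp
      obtain ⟨r, hr⟩ : f p ∈ Set.range g := h ▸ Set.mem_range_self p
      obtain ⟨s, hs⟩ : g p ∈ Set.range f := h.symm ▸ Set.mem_range_self p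
      have hrp : ¬ r < p := by
        intro hlt
        have h1 : f r = g r := ih r (by omega) r rfl
        have : f r = f p := by rw [h1, hr]
        exact absurd (hf.injective this) (Fin.ne_of_lt hlt)
      have hsp : ¬ s < p := by
        intro hlt
        have h1 : f s = g s := ih s (by omega) s rfl
        have : g s = g p := by rw [← h1, hs]
        exact absurd (hg.injective this) (Fin.ne_of_lt hlt)
      have h1 : g p ≤ g r := hg.monotone (not_lt.1 hrp)
      have h2 : f p ≤ f s := hf.monotone (not_lt.1 hsp)
      rw [hr] at h1; rw [hs] at h2; exact le_antisymm h2 h1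
  funext p; exact key p p rfl

lemma inversions_inj {n : ℕ} {u v : Equiv.Perm (Fin n)} (h : Inversions u = Inversions v) :
    u = v := by
  have key : ∀ i j : Fin n, (u.symm j < u.symm i ↔ v.symm j < v.symm i) := by
    intro i j
    rcases lt_trichotomy i j with hij | rfl | hij
    · simpa [Inversions, hij] using Set.ext_iff.1 h (i, j)
    · simp
    · have h2 : (u.symm i < u.symm j ↔ v.symm i < v.symm j) := by
        simpa [Inversions, hij] using Set.ext_iff.1 h (j, i)
      have hne : u.symm j ≠ u.symm i := fun e => (Fin.ne_of_gt hij) (u.symm.injective e).symm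
      have hne' : v.symm j ≠ v.symm i := fun e => (Fin.ne_of_gt hij) (v.symm.injective e).symm
      constructor
      · intro hlt
        rcases lt_trichotomy (v.symm j) (v.symm i) with h'|h'|h'
        · exact h'
        · exact absurd h' hne'
        · exact absurd (h2.2 h') (not_lt.2 hlt.le)
      · intro hlt
        rcases lt_trichotomy (u.symm j) (u.symm i) with h'|h'|h'
        · exact h'
        · exact absurd h' hne
        · exact absurd (h2.1 h') (not_lt.2 hlt.le)
  have hsm : StrictMono (fun x => v.symm (u x)) := by
    intro x y hxy
    have : u.symm (u x) < u.symm (u y) := by simpa using hxy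
    exact (key (u y) (u x)).1 this
  have hid : (fun x => v.symm (u x)) = (id : Fin n → Fin n) := by
    apply aux_sm hsm strictMono_id
    rw [Set.range_id]
    exact Set.range_eq_univ.2 (v.symm.surjective.comp u.surjective)
  apply Equiv.ext
  intro x
  have := congrFun hid x
  simp only [id] at this
  have h2 := congrArg v this
  simpa using h2

open Fin.NatCast in
lemma lamMax_apply {n d : ℕ} (x : Fin (n+1)) : lamMax (n+1) d x = x + (d : Fin (n+1)) := by
  induction d generalizing x with
  | zero => simp [lamMax]
  | succ k ih =>
    simp only [lamMax] at ih ⊢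
    rw [pow_succ, Equiv.Perm.mul_apply, finRotate_succ_apply, ih (x + 1)]
    push_cast
    abel

open Fin.NatCast in
lemma lamMax_symm_apply {n d : ℕ} (y : Fin (n+1)) :
    (lamMax (n+1) d).symm y = y - (d : Fin (n+1)) := by
  apply (Equiv.symm_apply_eq _).2
  rw [lamMax_apply]
  simp [sub_add_cancel]

open Fin.NatCast in
lemma mem_inversions_lamMax {n d : ℕ} (hd : d < n + 1) (p : Fin (n+1) × Fin (n+1)) :
    p ∈ Inversions (lamMax (n+1) d) ↔ (p.1 : ℕ) < d ∧ d ≤ (p.2 : ℕ) := by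
  obtain ⟨i, j⟩ := p
  simp only [Inversions, Set.mem_setOf_eq, lamMax_symm_apply]
  have hdv : ((d : Fin (n+1)) : ℕ) = d := Fin.val_cast_of_lt hd
  have hsub : ∀ x : Fin (n+1), (((x - (d : Fin (n+1))) : Fin (n+1)) : ℕ) =
      if (x : ℕ) < d then (x : ℕ) + (n + 1) - d else (x : ℕ) - d := by
    intro x
    rw [Fin.sub_def]
    simp only [hdv]
    have hx := x.isLt
    split_ifs with hxd
    · rw [Nat.mod_eq_of_lt (by omega)]; omega
    · have : (n + 1 - d + (x : ℕ)) = ((x : ℕ) - d) + (n + 1) := by omega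
      rw [this, Nat.add_mod_right, Nat.mod_eq_of_lt (by omega)]
  rw [Fin.lt_def, Fin.lt_def, hsub, hsub]
  have hi := i.isLt
  have hj := j.isLt
  split_ifs with h1 h2 h2 <;> omega

lemma mem_inv_of_descent {n : ℕ} (w : Equiv.Perm (Fin n)) (p q : Fin n)
    (hpq : (q : ℕ) = (p : ℕ) + 1) (hyx : w q < w p) : (w q, w p) ∈ Inversions w := by
  refine ⟨hyx, ?_⟩
  simp only [Equiv.symm_apply_apply]
  exact Fin.lt_def.2 (by omega)

lemma val_symm_eq_iff {n : ℕ} (w : Equiv.Perm (Fin n)) (i v : Fin n) :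
    ((w.symm i : Fin n) : ℕ) = (v : ℕ) ↔ (i : ℕ) = ((w v : Fin n) : ℕ) := by
  rw [Fin.val_eq_val, Fin.val_eq_val, Equiv.symm_apply_eq]

lemma inv_mul_swap {n : ℕ} (w : Equiv.Perm (Fin n)) (p q : Fin n)
    (hpq : (q : ℕ) = (p : ℕ) + 1) (hyx : w q < w p) :
    Inversions (w * Equiv.swap p q) = Inversions w \ {(w q, w p)} := by
  have hz : ∀ v, (w * Equiv.swap p q).symm v = Equiv.swap p q (w.symm v) := fun v => rfl
  have main : ∀ v : Fin n, (((Equiv.swap p q) (w.symm v) : Fin n) : ℕ) =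
      if ((w.symm v : Fin n) : ℕ) = (p : ℕ) then (q : ℕ)
      else if ((w.symm v : Fin n) : ℕ)= (q : ℕ) then (p : ℕ) else ((w.symm v : Fin n) : ℕ) := by
    intro v
    rw [Equiv.swap_apply_def]
    split_ifs <;> simp_all [Fin.ext_iff]
  ext ⟨i, j⟩
  simp only [Inversions, Set.mem_setOf_eq, Set.mem_diff, Set.mem_singleton_iff, hz,
    Prod.mk.injEq, Fin.lt_def, main]
  have f1 := val_symm_eq_iff w i p
  have f2 := val_symm_eq_iff w i q
  have f3 := val_symm_eq_iff w j p
  have f4 := val_symm_eq_iff w j q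
  have e1 : (i = w q) ↔ ((w.symm i : Fin n) : ℕ) = (q : ℕ) := by
    rw [val_symm_eq_iff, Fin.val_eq_val]
  have e2 : (j = w p) ↔ ((w.symm j : Fin n) : ℕ) = (p : ℕ) := by
    rw [val_symm_eq_iff, Fin.val_eq_val]
  rw [e1, e2]
  have hyx' : ((w q : Fin n) : ℕ) < ((w p : Fin n) : ℕ) := hyx
  split_ifs <;> omega

lemma mem_inversions_iff {n : ℕ} (x : Equiv.Perm (Fin n)) (a b : Fin n) :
    (a, b) ∈ Inversions x ↔ (a : ℕ) < (b : ℕ) ∧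
      ((x.symm b : Fin n) : ℕ) < ((x.symm a : Fin n) : ℕ) := by
  exact Iff.rfl

lemma exchange {n : ℕ} {u w : Equiv.Perm (Fin n)} (hsub : Inversions u ⊆ Inversions w)
    (hne : u ≠ w) : ∃ i j : Fin n, (i, j) ∈ Inversions w ∧ (i, j) ∉ Inversions u ∧
      ((u.symm j : Fin n) : ℕ) = ((u.symm i : Fin n) : ℕ) + 1 := by
  classical
  have hSne : ∃ g : ℕ, ∃ i j : Fin n, (i, j) ∈ Inversions w ∧ (i, j) ∉ Inversions u ∧
      ((u.symm j : Fin n) : ℕ) = ((u.symm i : Fin n) : ℕ) + g := by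
    have : Inversions u ≠ Inversions w := fun h => hne (inversions_inj h)
    have : ∃ p, p ∈ Inversions w ∧ p ∉ Inversions u := by
      by_contra hc
      push_neg at hc
      exact this (Set.Subset.antisymm hsub hc)
    obtain ⟨⟨i, j⟩, hw, hu⟩ := this
    rw [mem_inversions_iff] at hw
    rw [mem_inversions_iff] at hu
    push_neg at hu
    have hij : (i : ℕ) < j := hw.1
    have hne' : ((u.symm j : Fin n) : ℕ) ≠ ((u.symm i : Fin n) : ℕ) := by
      intro h
      have : u.symm j = u.symm i := Fin.ext h
      have := u.symm.injective this
      simp [Fin.ext_iff] at this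
      omega
    have hlt : ((u.symm i : Fin n) : ℕ) < ((u.symm j : Fin n) : ℕ) := by
      have := hu hw.1
      omega
    exact ⟨_, i, j, (mem_inversions_iff w i j).2 hw, fun hc => by
      rw [mem_inversions_iff] at hc; omega, (Nat.add_sub_cancel' hlt.le).symm⟩
  obtain ⟨i, j, hw, hu, hgap⟩ := Nat.find_spec hSne
  set g := Nat.find hSne with hgdef
  have hmin : ∀ g' < g, ¬ ∃ i j : Fin n, (i, j) ∈ Inversions w ∧ (i, j) ∉ Inversions u ∧
      ((u.symm j : Fin n) : ℕ) = ((u.symm i : Fin n) : ℕ) + g' := fun g' h => Nat.find_min hSne h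
  -- basic facts
  rw [mem_inversions_iff] at hw
  have hu' : ¬ ((i : ℕ) < (j : ℕ) ∧ ((u.symm j : Fin n) : ℕ) < ((u.symm i : Fin n) : ℕ)) := by
    rw [← mem_inversions_iff]; exact hu
  have hij : (i : ℕ) < j := hw.1
  have hg1 : 1 ≤ g := by
    rcases Nat.eq_zero_or_pos g with h0 | h; swap; · exact h
    exfalso
    rw [h0] at hgap
    have : u.symm j = u.symm i := Fin.ext (by omega)
    have := u.symm.injective this
    rw [Fin.ext_iff] at this
    omega
  rcases Nat.lt_or_ge g 2 with hg2 | hg2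
  · refine ⟨i, j, (mem_inversions_iff w i j).2 hw, hu, ?_⟩
    omega
  -- now derive a contradiction
  exfalso
  have hjn := (u.symm j).isLt
  set pi : ℕ := ((u.symm i : Fin n) : ℕ) with hpi
  have hmn : pi + 1 < n := by omega
  set m : Fin n := ⟨pi + 1, by omega⟩ with hm
  set k : Fin n := u m with hk
  have hposk : ((u.symm k : Fin n) : ℕ) = pi + 1 := by rw [hk]; simp [hm]
  have hki : (k : ℕ) ≠ (i : ℕ) := by
    intro h
    have hh : k = i := Fin.ext h
    rw [hh] at hposk
    omega
  have hkj : (k : ℕ) ≠ (j : ℕ) := by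
    intro h
    have hh : k = j := Fin.ext h
    rw [hh] at hposk
    omega
  -- case analysis
  rcases Nat.lt_or_ge (i : ℕ) (k : ℕ) with hik | hik
  · -- i < k
    have hik' : (i, k) ∉ Inversions u := by
      rw [mem_inversions_iff]; omega
    by_cases hikw : (i, k) ∈ Inversions w
    · exact hmin 1 (by omega) ⟨i, k, hikw, hik', by omega⟩
    · rw [mem_inversions_iff] at hikw
      push_neg at hikw
      have hwik : ((w.symm i : Fin n) : ℕ) < ((w.symm k : Fin n) : ℕ) := by
        have h1 := hikw hik
        have h2 : w.symm i ≠ w.symm k := fun h => hki (by rw [w.symm.injective h])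
        have h3 : ((w.symm i : Fin n) : ℕ) ≠ ((w.symm k : Fin n) : ℕ) := fun h => h2 (Fin.ext h)
        omega
      rcases Nat.lt_or_ge (k : ℕ) (j : ℕ) with hkj' | hkj'
      · -- k < j : (k,j) ∈ Inv w \ Inv u with gap g - 1
        have h1 : (k, j) ∈ Inversions w := by
          rw [mem_inversions_iff]
          exact ⟨hkj', by omega⟩
        have h2 : (k, j) ∉ Inversions u := by
          rw [mem_inversions_iff]; omega
        exact hmin (g - 1) (by omega) ⟨k, j, h1, h2, by omega⟩
      · -- j < k : (j,k) ∈ Inv u ⊆ Inv w gives contradiction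
        have h1 : (j, k) ∈ Inversions u := by
          rw [mem_inversions_iff]
          refine ⟨by omega, by omega⟩
        have h2 := hsub h1
        rw [mem_inversions_iff] at h2
        omega
  · -- k < i
    have hik2 : (k : ℕ) < (i : ℕ) := by omega
    have h1 : (k, i) ∈ Inversions u := by
      rw [mem_inversions_iff]
      exact ⟨hik2, by omega⟩
    have h2 := hsub h1
    rw [mem_inversions_iff] at h2
    have hkj3 : (k : ℕ) < (j : ℕ) := by omega
    have h3 : (k, j) ∉ Inversions u := by
      rw [mem_inversions_iff]; omega
    by_cases h4 : (k, j) ∈ Inversions w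
    · exact hmin (g - 1) (by omega) ⟨k, j, h4, h3, by omega⟩
    · rw [mem_inversions_iff] at h4
      push_neg at h4
      have h5 := h4 hkj3
      -- pos_w k ≥ pos_w j, but pos_w i < pos_w k and pos_w j < pos_w i
      omega

lemma swap_sq {n : ℕ} (p q : Fin n) (u : Equiv.Perm (Fin n)) :
    u * Equiv.swap p q * Equiv.swap p q = u := by
  rw [mul_assoc, Equiv.swap_mul_self, mul_one]

lemma witness_iff {n : ℕ} (L w : Equiv.Perm (Fin n)) (hwL : WeakLE w L)
    (u : Equiv.Perm (Fin n)) :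
    (WeakLE u L ∧ WeakLT u w ∧
      ∀ z : Equiv.Perm (Fin n), WeakLE z L → WeakLT u z → WeakLT z w → False) ↔
    ∃ p q : Fin n, (q : ℕ) = (p : ℕ) + 1 ∧ w q < w p ∧ u = w * Equiv.swap p q := by
  constructor
  · rintro ⟨huL, ⟨huw, hne⟩, hcov⟩
    obtain ⟨i, j, hiw, hiu, hadj⟩ := exchange huw hne
    set p : Fin n := u.symm i with hp
    set q : Fin n := u.symm j with hq
    have hpq : (q : ℕ) = (p : ℕ) + 1 := hadj
    set z : Equiv.Perm (Fin n) := u * Equiv.swap p q with hzdef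
    have hzq : z q = i := by
      rw [hzdef]
      simp [Equiv.swap_apply_right, hp]
    have hzp : z p = j := by
      rw [hzdef]
      simp [Equiv.swap_apply_left, hq]
    have hij : i < j := hiw.1
    have hdesc : z q < z p := by rw [hzq, hzp]; exact hij
    have hzu : z * Equiv.swap p q = u := swap_sq p q u
    have hinvu : Inversions u = Inversions z \ {(i, j)} := by
      have := inv_mul_swap z p q hpq hdesc
      rw [hzu, hzq, hzp] at this
      exact this
    have hmem : (i, j) ∈ Inversions z := by
      have := mem_inv_of_descent z p q hpq hdesc
      rwa [hzq, hzp] at this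
    have hzw : Inversions z ⊆ Inversions w := by
      intro ρ hρ
      by_cases hρij : ρ = (i, j)
      · rw [hρij]; exact hiw
      · exact huw (hinvu ▸ ⟨hρ, hρij⟩)
    have huz : WeakLT u z := by
      constructor
      · intro ρ hρ; rw [hinvu] at hρ; exact hρ.1
      · intro h
        rw [h] at hinvu
        have := hinvu ▸ hmem
        exact this.2 rfl
    have hz : z = w := by
      by_contra hzw'
      exact hcov z (fun ρ hρ => hwL (hzw hρ)) huz ⟨hzw, hzw'⟩
    exact ⟨p, q, hpq, by rw [← hz, hzq, hzp]; exact hij, by rw [← hz, ← hzu]⟩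
  · rintro ⟨p, q, hpq, hdesc, rfl⟩
    have hinv := inv_mul_swap w p q hpq hdesc
    have hmem := mem_inv_of_descent w p q hpq hdesc
    have hsub : WeakLE (w * Equiv.swap p q) w := by
      intro ρ hρ; rw [hinv] at hρ; exact hρ.1
    have hne : w * Equiv.swap p q ≠ w := by
      intro h
      rw [h] at hinv
      have := hinv ▸ hmem
      exact this.2 rfl
    refine ⟨fun ρ hρ => hwL (hsub hρ), ⟨hsub, hne⟩, ?_⟩
    rintro z hzL ⟨huz, hnez⟩ ⟨hzw, hnezw⟩
    have h1 : Inversions z ≠ Inversions w := fun h => hnezw (inversions_inj h)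
    obtain ⟨ρ, hρw, hρz⟩ : ∃ ρ, ρ ∈ Inversions w ∧ ρ ∉ Inversions z := by
      by_contra hc
      push_neg at hc
      exact h1 (Set.Subset.antisymm hzw hc)
    have hρu : ρ ∉ Inversions (w * Equiv.swap p q) := fun h => hρz (huz h)
    have hρeq : ρ = (w q, w p) := by
      by_contra hc
      exact hρu (hinv ▸ ⟨hρw, hc⟩)
    have hzu : Inversions z ⊆ Inversions (w * Equiv.swap p q) := by
      intro ζ hζ
      rw [hinv]
      refine ⟨hzw hζ, ?_⟩
      intro hc
      rw [Set.mem_singleton_iff] at hc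
      rw [← hρeq] at hc
      exact hρz (hc ▸ hζ)
    exact hnez (inversions_inj (Set.Subset.antisymm huz hzu))

lemma swap_desc_inj {n : ℕ} (w : Equiv.Perm (Fin n)) (p q p' q' : Fin n)
    (h1 : (q : ℕ) = (p : ℕ) + 1) (h2 : (q' : ℕ) = (p' : ℕ) + 1)
    (h : w * Equiv.swap p q = w * Equiv.swap p' q') : p = p' ∧ q = q' := by
  have hs : Equiv.swap p q = Equiv.swap p' q' := by
    have := congrArg (fun z => w⁻¹ * z) h
    simpa [← mul_assoc] using this
  have hne : p ≠ q := fun hc => by rw [hc] at h1; omega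
  have hap : Equiv.swap p' q' p = q := by rw [← hs]; exact Equiv.swap_apply_left p q
  by_cases hpp : p = p'
  · subst hpp
    rw [Equiv.swap_apply_left] at hap
    exact ⟨rfl, hap.symm⟩
  · by_cases hpq : p = q'
    · subst hpq
      rw [Equiv.swap_apply_right] at hap
      exfalso
      rw [hap] at h2
      omega
    · rw [Equiv.swap_apply_of_ne_of_ne hpp hpq] at hap
      exact absurd hap hne

lemma IJI_iff_descents {n d : ℕ} (w : Equiv.Perm (Fin n)) :
    IntervalJoinIrred n d w ↔ WeakLE w (lamMax n d) ∧
      ∃! pq : Fin n × Fin n, (pq.2 : ℕ) = (pq.1 : ℕ) + 1 ∧ w pq.2 < w pq.1 := by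
  constructor
  · rintro ⟨hw, u, hu, huniq⟩
    refine ⟨hw, ?_⟩
    obtain ⟨p, q, hpq, hdesc, hueq⟩ := (witness_iff (lamMax n d) w hw u).1 hu
    refine ⟨(p, q), ⟨hpq, hdesc⟩, ?_⟩
    rintro ⟨p', q'⟩ ⟨hpq', hdesc'⟩
    have h' := huniq (w * Equiv.swap p' q')
      ((witness_iff (lamMax n d) w hw _).2 ⟨p', q', hpq', hdesc', rfl⟩)
    rw [hueq] at h'
    obtain ⟨e1, e2⟩ := swap_desc_inj w p' q' p q hpq' hpq h'
    simp [e1, e2]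
  · rintro ⟨hw, ⟨⟨p, q⟩, ⟨hpq, hdesc⟩, huniq⟩⟩
    refine ⟨hw, w * Equiv.swap p q,
      (witness_iff (lamMax n d) w hw _).2 ⟨p, q, hpq, hdesc, rfl⟩, ?_⟩
    intro u' hu'
    obtain ⟨p', q', hpq', hdesc', hueq⟩ := (witness_iff (lamMax n d) w hw u').1 hu'
    have := huniq (p', q') ⟨hpq', hdesc'⟩
    rw [Prod.mk.injEq] at this
    rw [hueq, this.1, this.2]


def Fab (d a b p : ℕ) : ℕ :=
  if p < a then p else if p < a + (b - d) then p + (d - a) else if p < b then p - (b - d) else p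

lemma chain_mono {n : ℕ} (w : Equiv.Perm (Fin n)) (lo hi : ℕ) (hhi : hi < n)
    (hstep : ∀ t (hlo : lo ≤ t) (hhi2 : t + 1 ≤ hi),
      ((w ⟨t, by omega⟩ : Fin n) : ℕ) < ((w ⟨t + 1, by omega⟩ : Fin n) : ℕ)) :
    ∀ s t (hs : lo ≤ s) (hst : s < t) (ht : t ≤ hi),
      ((w ⟨s, by omega⟩ : Fin n) : ℕ) < ((w ⟨t, by omega⟩ : Fin n) : ℕ) := by
  have key : ∀ k s (h1 : lo ≤ s) (h2 : s + 1 + k ≤ hi),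
      ((w ⟨s, by omega⟩ : Fin n) : ℕ) < ((w ⟨s + 1 + k, by omega⟩ : Fin n) : ℕ) := by
    intro k
    induction k with
    | zero => intro s hs hhs; exact hstep s hs (by omega)
    | succ m ih =>
      intro s hs hhs
      have h1 := ih s hs (by omega)
      have h2 := hstep (s + 1 + m) (by omega) (by omega)
      have e : s + 1 + (m + 1) = s + 1 + m + 1 := by omega
      exact lt_trans h1 h2
  intro s t hs hst ht
  obtain ⟨k, rfl⟩ : ∃ k, t = s + 1 + k := ⟨t - s - 1, by omega⟩
  exact key k s hs (by omega)

lemma enum_unique (k : ℕ) (F G : ℕ → ℕ)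
    (hF : ∀ s t, s < t → t < k → F s < F t)
    (hG : ∀ s t, s < t → t < k → G s < G t)
    (h1 : ∀ t, t < k → ∃ s, s < k ∧ G s = F t)
    (h2 : ∀ s, s < k → ∃ t, t < k ∧ F t = G s) :
    ∀ t, t < k → F t = G t := by
  intro t
  induction t using Nat.strong_induction_on with
  | _ t ih =>
    intro htk
    obtain ⟨s, hsk, hGs⟩ := h1 t htk
    obtain ⟨r, hrk, hFr⟩ := h2 t htk
    have hst : ¬ s < t := by
      intro h
      have e1 := ih s h hsk
      have e2 := hF s t h htk
      omega
    have hrt : ¬ r < t := by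
      intro h
      have e1 := ih r h hrk
      have e2 := hG r t h htk
      omega
    have hst2 : G t ≤ G s := by
      rcases Nat.eq_or_lt_of_le (Nat.not_lt.1 hst) with h | h
      · rw [h]
      · exact le_of_lt (hG t s h hsk)
    have hrt2 : F t ≤ F r := by
      rcases Nat.eq_or_lt_of_le (Nat.not_lt.1 hrt) with h | h
      · rw [h]
      · exact le_of_lt (hF t r h hrk)
    omega

lemma core_forward {n d : ℕ} (hd1 : 1 ≤ d) (hdn : d < n) (w : Equiv.Perm (Fin n))
    (SH : ∀ p q : Fin n, (p : ℕ) < (q : ℕ) → ((w q : Fin n) : ℕ) < ((w p : Fin n) : ℕ) →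
      ((w q : Fin n) : ℕ) < d ∧ d ≤ ((w p : Fin n) : ℕ))
    (p0 q0 : Fin n) (hq0 : (q0 : ℕ) = (p0 : ℕ) + 1) (hdesc : w q0 < w p0)
    (huni : ∀ p q : Fin n, (q : ℕ) = (p : ℕ) + 1 → w q < w p → p = p0) :
    ∃ a b : ℕ, a ≤ d - 1 ∧ d + 1 ≤ b ∧ b ≤ n ∧
      ∀ p : Fin n, ((w p : Fin n) : ℕ) = Fab d a b (p : ℕ) := by
  classical
  obtain ⟨a, ha_def⟩ : ∃ a : ℕ, a = ((w q0 : Fin n) : ℕ) := ⟨_, rfl⟩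
  obtain ⟨B, hB_def⟩ : ∃ B : ℕ, B = ((w p0 : Fin n) : ℕ) + 1 := ⟨_, rfl⟩
  have hdescv : ((w q0 : Fin n) : ℕ) < ((w p0 : Fin n) : ℕ) := hdesc
  have haB := SH p0 q0 (by omega) hdescv
  have had : a < d := by omega
  have hdB : d ≤ B - 1 := by omega
  have hBn : B ≤ n := by have := (w p0).isLt; omega
  have hp0 := p0.isLt
  have hq0n := q0.isLt
  have haB2 : a < B := by omega
  -- injectivity in value form
  have winj : ∀ p q : Fin n, ((w p : Fin n) : ℕ) = ((w q : Fin n) : ℕ) → (p : ℕ) = (q : ℕ) :=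
    fun p q h => congrArg Fin.val (w.injective (Fin.ext h))
  have sinj : ∀ v : Fin n, w (w.symm v) = v := fun v => w.apply_symm_apply v
  -- no descent away from p0
  have noDesc : ∀ p q : Fin n, (q : ℕ) = (p : ℕ) + 1 → p ≠ p0 →
      ((w p : Fin n) : ℕ) < ((w q : Fin n) : ℕ) := by
    intro p q hq hne
    rcases lt_trichotomy ((w p : Fin n) : ℕ) ((w q : Fin n) : ℕ) with h1 | h1 | h1
    · exact h1
    · exact absurd (winj p q h1) (by omega)
    · exact absurd (huni p q hq (Fin.lt_def.2 h1)) hne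
  have mono1 : ∀ p q : Fin n, (p : ℕ) < (q : ℕ) → (q : ℕ) ≤ (p0 : ℕ) →
      ((w p : Fin n) : ℕ) < ((w q : Fin n) : ℕ) := by
    intro p q h1 h2
    have step : ∀ t (hlo : 0 ≤ t) (hhi2 : t + 1 ≤ (p0 : ℕ)),
        ((w ⟨t, by omega⟩ : Fin n) : ℕ) < ((w ⟨t + 1, by omega⟩ : Fin n) : ℕ) := by
      intro t h3 h4
      exact noDesc ⟨t, by omega⟩ ⟨t + 1, by omega⟩ rfl
        (fun hc => by have := congrArg Fin.val hc; simp at this; omega)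
    have key := chain_mono w 0 (p0 : ℕ) (by omega) step (p : ℕ) (q : ℕ) (by omega) h1 h2
    have e1 : (⟨(p : ℕ), by omega⟩ : Fin n) = p := Fin.ext rfl
    have e2 : (⟨(q : ℕ), by omega⟩ : Fin n) = q := Fin.ext rfl
    rwa [e1, e2] at key
  have mono2 : ∀ p q : Fin n, (p0 : ℕ) < (p : ℕ) → (p : ℕ) < (q : ℕ) →
      ((w p : Fin n) : ℕ) < ((w q : Fin n) : ℕ) := by
    intro p q h1 h2
    have step : ∀ t (hlo : (p0 : ℕ) + 1 ≤ t) (hhi2 : t + 1 ≤ n - 1),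
        ((w ⟨t, by omega⟩ : Fin n) : ℕ) < ((w ⟨t + 1, by omega⟩ : Fin n) : ℕ) := by
      intro t h3 h4
      exact noDesc ⟨t, by omega⟩ ⟨t + 1, by omega⟩ rfl
        (fun hc => by have := congrArg Fin.val hc; simp at this; omega)
    have hqn := q.isLt
    have key := chain_mono w ((p0 : ℕ) + 1) (n - 1) (by omega) step (p : ℕ) (q : ℕ)
      (by omega) h2 (by omega)
    have e1 : (⟨(p : ℕ), by omega⟩ : Fin n) = p := Fin.ext rfl
    have e2 : (⟨(q : ℕ), by omega⟩ : Fin n) = q := Fin.ext rfl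
    rwa [e1, e2] at key
  -- values of the first run
  have incl1 : ∀ p : Fin n, (p : ℕ) ≤ (p0 : ℕ) →
      (((w p : Fin n) : ℕ) < a ∨ (d ≤ ((w p : Fin n) : ℕ) ∧ ((w p : Fin n) : ℕ) < B)) := by
    intro p hp
    by_cases hsm : ((w p : Fin n) : ℕ) < d
    · left
      by_contra hc
      push_neg at hc
      have hva : a ≠ ((w p : Fin n) : ℕ) := by
        intro h
        have := winj q0 p (by omega)
        omega
      have := SH p q0 (by omega) (by omega)
      omega
    · right
      push_neg at hsm
      refine ⟨hsm, ?_⟩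
      rcases Nat.lt_or_ge (p : ℕ) (p0 : ℕ) with h1 | h1
      · have := mono1 p p0 h1 le_rfl
        omega
      · have : p = p0 := Fin.ext (by omega)
        rw [this]
        omega
  have incl2 : ∀ v : Fin n, ((v : ℕ) < a ∨ (d ≤ (v : ℕ) ∧ (v : ℕ) < B)) →
      ((w.symm v : Fin n) : ℕ) ≤ (p0 : ℕ) := by
    intro v hv
    by_contra hc
    push_neg at hc
    have hvv := sinj v
    have hvval : ((w (w.symm v) : Fin n) : ℕ) = (v : ℕ) := congrArg Fin.val hvv
    have hne : ((w.symm v : Fin n) : ℕ) ≠ (q0 : ℕ) := by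
      intro h
      have : w.symm v = q0 := Fin.ext h
      rw [this] at hvval
      omega
    rcases hv with h1 | h1
    · have := SH q0 (w.symm v) (by omega) (by omega)
      omega
    · have hvB : (v : ℕ) ≠ B - 1 := by
        intro h
        have h2 : ((w (w.symm v) : Fin n) : ℕ) = ((w p0 : Fin n) : ℕ) := by omega
        have := winj (w.symm v) p0 h2
        omega
      have := SH p0 (w.symm v) (by omega) (by omega)
      omega
  -- size fact: p0 + 1 = a + (B - d)
  have card1 : (Finset.range ((p0 : ℕ) + 1)).card =
      (Finset.univ.filter (fun v : Fin n => (v : ℕ) < a ∨ (d ≤ (v : ℕ) ∧ (v : ℕ) < B))).card := by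
    refine Finset.card_bij' (i := fun t (ht : t ∈ Finset.range ((p0 : ℕ) + 1)) =>
        w ⟨t, by have := Finset.mem_range.1 ht; omega⟩)
      (j := fun v (hv : v ∈ Finset.univ.filter
        (fun v : Fin n => (v : ℕ) < a ∨ (d ≤ (v : ℕ) ∧ (v : ℕ) < B))) =>
        ((w.symm v : Fin n) : ℕ)) ?_ ?_ ?_ ?_
    · intro t ht
      rw [Finset.mem_filter]
      exact ⟨Finset.mem_univ _, incl1 _ (by have := Finset.mem_range.1 ht; simp; omega)⟩
    · intro v hv
      rw [Finset.mem_filter] at hv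
      rw [Finset.mem_range]
      have := incl2 v hv.2
      omega
    · intro t ht
      simp
    · intro v hv
      have e : (⟨((w.symm v : Fin n) : ℕ), by have := (w.symm v).isLt; omega⟩ : Fin n)
          = w.symm v := Fin.ext rfl
      rw [e]
      exact w.apply_symm_apply v
  have card2 : (Finset.range (a + (B - d))).card =
      (Finset.univ.filter (fun v : Fin n => (v : ℕ) < a ∨ (d ≤ (v : ℕ) ∧ (v : ℕ) < B))).card := by
    refine Finset.card_bij' (i := fun t (ht : t ∈ Finset.range (a + (B - d))) =>
        (⟨if t < a then t else t + (d - a), by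
          have := Finset.mem_range.1 ht; split_ifs <;> omega⟩ : Fin n))
      (j := fun v _ => if (v : ℕ) < a then (v : ℕ) else (v : ℕ) - (d - a)) ?_ ?_ ?_ ?_
    · intro t ht
      have := Finset.mem_range.1 ht
      rw [Finset.mem_filter]
      refine ⟨Finset.mem_univ _, ?_⟩
      simp only [Fin.val_mk]
      split_ifs <;> omega
    · intro v hv
      rw [Finset.mem_filter] at hv
      rw [Finset.mem_range]
      have := hv.2
      split_ifs <;> omega
    · intro t ht
      have := Finset.mem_range.1 ht
      simp only [Fin.val_mk]
      split_ifs <;> omega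
    · intro v hv
      rw [Finset.mem_filter] at hv
      have hvn := v.isLt
      apply Fin.ext
      simp only [Fin.val_mk]
      split_ifs <;> omega
  have size : (p0 : ℕ) + 1 = a + (B - d) := by
    have h := card1.trans card2.symm
    simpa using h
  -- ℕ-valued versions
  obtain ⟨Wv, hWv⟩ : ∃ Wv : ℕ → ℕ, ∀ p : Fin n, Wv (p : ℕ) = ((w p : Fin n) : ℕ) :=
    ⟨fun t => if h : t < n then ((w ⟨t, h⟩ : Fin n) : ℕ) else 0, fun p => by
      dsimp only
      rw [dif_pos p.isLt]⟩
  have hWmk : ∀ t (h : t < n), Wv t = ((w ⟨t, h⟩ : Fin n) : ℕ) := by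
    intro t h
    have := hWv ⟨t, h⟩
    simpa using this
  obtain ⟨Pv, hPv⟩ : ∃ Pv : ℕ → ℕ, ∀ v : Fin n, Pv (v : ℕ) = ((w.symm v : Fin n) : ℕ) :=
    ⟨fun t => if h : t < n then ((w.symm ⟨t, h⟩ : Fin n) : ℕ) else 0, fun v => by
      dsimp only
      rw [dif_pos v.isLt]⟩
  have hPmk : ∀ t (h : t < n), Pv t = ((w.symm ⟨t, h⟩ : Fin n) : ℕ) := by
    intro t h
    have := hPv ⟨t, h⟩
    simpa using this
  have hWP : ∀ v (h : v < n), Wv (Pv v) = v := by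
    intro v h
    rw [hPmk v h]
    rw [hWv (w.symm ⟨v, h⟩)]
    rw [sinj ⟨v, h⟩]
  have hPW : ∀ t (h : t < n), Pv (Wv t) = t := by
    intro t h
    rw [hWmk t h, hPv (w ⟨t, h⟩), Equiv.symm_apply_apply]
  have hWlt : ∀ t (h : t < n), Wv t < n := by
    intro t h
    rw [hWmk t h]; exact (w ⟨t, h⟩).isLt
  have hPlt : ∀ t (h : t < n), Pv t < n := by
    intro t h
    rw [hPmk t h]; exact (w.symm ⟨t, h⟩).isLt
  have mono1' : ∀ s t, s < t → t ≤ (p0 : ℕ) → Wv s < Wv t := by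
    intro s t h1 h2
    rw [hWmk s (by omega), hWmk t (by omega)]
    exact mono1 ⟨s, by omega⟩ ⟨t, by omega⟩ h1 h2
  have mono2' : ∀ s t, (p0 : ℕ) < s → s < t → t < n → Wv s < Wv t := by
    intro s t h1 h2 h3
    rw [hWmk s (by omega), hWmk t (by omega)]
    exact mono2 ⟨s, by omega⟩ ⟨t, by omega⟩ h1 h2
  have incl1' : ∀ t, t ≤ (p0 : ℕ) → (Wv t < a ∨ (d ≤ Wv t ∧ Wv t < B)) := by
    intro t ht
    rw [hWmk t (by omega)]
    exact incl1 ⟨t, by omega⟩ ht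
  have incl2' : ∀ v, v < n → (v < a ∨ (d ≤ v ∧ v < B)) → Pv v ≤ (p0 : ℕ) := by
    intro v hvn hv
    rw [hPmk v hvn]
    exact incl2 ⟨v, hvn⟩ hv
  -- first run
  have run1 : ∀ t, t ≤ (p0 : ℕ) → Wv t = if t < a then t else t + (d - a) := by
    have := enum_unique ((p0 : ℕ) + 1) Wv (fun t => if t < a then t else t + (d - a))
      (fun s t hst ht => mono1' s t hst (by omega))
      (fun s t hst ht => by split_ifs <;> omega)
      ?_ ?_
    · intro t ht; exact this t (by omega)
    · -- every first-run value is hit by G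
      intro t ht
      have hc := incl1' t (by omega)
      refine ⟨if Wv t < a then Wv t else Wv t - (d - a), by split_ifs <;> omega, ?_⟩
      split_ifs <;> omega
    · -- every G-value is a first-run value
      intro s hs
      set v : ℕ := if s < a then s else s + (d - a) with hv
      have hvn : v < n := by rw [hv]; split_ifs <;> omega
      have hcond : v < a ∨ (d ≤ v ∧ v < B) := by rw [hv]; split_ifs <;> omega
      refine ⟨Pv v, by have := incl2' v hvn hcond; omega, ?_⟩
      exact hWP v hvn
  -- second run
  have run2 : ∀ t, (p0 : ℕ) < t → t < n →
      Wv t = if t - ((p0 : ℕ) + 1) < d - a then a + (t - ((p0 : ℕ) + 1))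
        else B + (t - ((p0 : ℕ) + 1) - (d - a)) := by
    have key := enum_unique (n - ((p0 : ℕ) + 1)) (fun t => Wv ((p0 : ℕ) + 1 + t))
      (fun t => if t < d - a then a + t else B + (t - (d - a)))
      (fun s t hst ht => mono2' _ _ (by omega) (by omega) (by omega))
      (fun s t hst ht => by split_ifs <;> omega)
      ?_ ?_
    · intro t h1 h2
      have := key (t - ((p0 : ℕ) + 1)) (by omega)
      rw [show (p0 : ℕ) + 1 + (t - ((p0 : ℕ) + 1)) = t by omega] at this
      exact this
    · -- values of second run lie in the complement
      intro t ht
      set v : ℕ := Wv ((p0 : ℕ) + 1 + t) with hv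
      have hvn : v < n := hWlt _ (by omega)
      have hcond : ¬ (v < a ∨ (d ≤ v ∧ v < B)) := by
        intro hc
        have := incl2' v hvn hc
        rw [hv, hPW ((p0 : ℕ) + 1 + t) (by omega)] at this
        omega
      push_neg at hcond
      refine ⟨if v < d then v - a else v - B + (d - a), by split_ifs <;> omega, ?_⟩
      split_ifs <;> omega
    · intro s hs
      set v : ℕ := if s < d - a then a + s else B + (s - (d - a)) with hv
      have hvn : v < n := by rw [hv]; split_ifs <;> omega
      have hcond : ¬ (v < a ∨ (d ≤ v ∧ v < B)) := by rw [hv]; split_ifs <;> omega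
      have hpos : (p0 : ℕ) < Pv v := by
        by_contra hc
        push_neg at hc
        have := incl1' (Pv v) hc
        rw [hWP v hvn] at this
        exact hcond this
      refine ⟨Pv v - ((p0 : ℕ) + 1), by have := hPlt v hvn; omega, ?_⟩
      rw [show (p0 : ℕ) + 1 + (Pv v - ((p0 : ℕ) + 1)) = Pv v by omega]
      exact hWP v hvn
  -- assemble
  refine ⟨a, B, by omega, by omega, hBn, ?_⟩
  intro p
  rw [← hWv p]
  rcases le_or_gt (p : ℕ) (p0 : ℕ) with h | h
  · rw [run1 (p : ℕ) h]
    simp only [Fab]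
    split_ifs <;> omega
  · rw [run2 (p : ℕ) h p.isLt]
    simp only [Fab]
    split_ifs <;> omega

lemma core_backward {n d a b : ℕ} (hd1 : 1 ≤ d) (hdn : d < n) (ha : a ≤ d - 1)
    (hb1 : d + 1 ≤ b) (hb2 : b ≤ n) (w : Equiv.Perm (Fin n))
    (hw : ∀ p : Fin n, ((w p : Fin n) : ℕ) = Fab d a b (p : ℕ)) :
    (∀ p q : Fin n, (p : ℕ) < (q : ℕ) → ((w q : Fin n) : ℕ) < ((w p : Fin n) : ℕ) →
      (((w q : Fin n) : ℕ) < d ∧ d ≤ ((w p : Fin n) : ℕ))) ∧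
    ∃! pq : Fin n × Fin n, (pq.2 : ℕ) = (pq.1 : ℕ) + 1 ∧ w pq.2 < w pq.1 := by
  have had : a < d := by omega
  constructor
  · intro p q hpq hlt
    have hpn := p.isLt; have hqn := q.isLt
    rw [hw p, hw q] at hlt ⊢
    simp only [Fab] at hlt ⊢
    split_ifs at hlt ⊢ <;> omega
  · refine ⟨(⟨a + (b - d) - 1, by omega⟩, ⟨a + (b - d), by omega⟩), ⟨by simp; omega, ?_⟩, ?_⟩
    · show w _ < w _
      rw [Fin.lt_def, hw, hw]
      simp only [Fab, Fin.val_mk]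
      split_ifs <;> omega
    · rintro ⟨p, q⟩ ⟨hq, hlt⟩
      have hlt' : ((w q : Fin n) : ℕ) < ((w p : Fin n) : ℕ) := hlt
      rw [hw p, hw q] at hlt'
      simp only [Fab] at hlt'
      have hpn := p.isLt; have hqn := q.isLt
      have hq' : (q : ℕ) = (p : ℕ) + 1 := hq
      have hp : (p : ℕ) = a + (b - d) - 1 := by split_ifs at hlt' <;> omega
      rw [Prod.mk.injEq]
      constructor <;> (apply Fin.ext; simp; omega)

lemma list_eq {n d a b : ℕ} (hd1 : 1 ≤ d) (hdn : d < n) (ha : a ≤ d - 1)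
    (hb1 : d + 1 ≤ b) (hb2 : b ≤ n) :
    List.range' 1 a ++ List.range' (d + 1) (b - d) ++ List.range' (a + 1) (d - a) ++
      List.range' (b + 1) (n - b) = List.ofFn (fun i : Fin n => Fab d a b (i : ℕ) + 1) := by
  have had : a < d := by omega
  apply List.ext_getElem
  · simp only [List.length_append, List.length_range', List.length_ofFn]
    omega
  · intro k h1 h2
    simp only [List.length_ofFn] at h2
    simp only [List.getElem_append, List.getElem_range', List.length_range',
      List.length_append, List.getElem_ofFn, Fab, Fin.val_mk]
    split_ifs <;> omega

def Gab (d a b v : ℕ) : ℕ :=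
  if v < a then v else if v < d then v + (b - d) else if v < b then v - (d - a) else v

def wab (n d a b : ℕ) (hd1 : 1 ≤ d) (hdn : d < n) (ha : a ≤ d - 1)
    (hb1 : d + 1 ≤ b) (hb2 : b ≤ n) : Equiv.Perm (Fin n) where
  toFun p := ⟨Fab d a b (p : ℕ), by
    have := p.isLt; simp only [Fab]; split_ifs <;> omega⟩
  invFun v := ⟨Gab d a b (v : ℕ), by
    have := v.isLt; simp only [Gab]; split_ifs <;> omega⟩
  left_inv p := by
    have := p.isLt
    have had : a < d := by omega
    apply Fin.ext
    simp only [Fab, Gab, Fin.val_mk]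
    split_ifs <;> omega
  right_inv v := by
    have := v.isLt
    have had : a < d := by omega
    apply Fin.ext
    simp only [Fab, Gab, Fin.val_mk]
    split_ifs <;> omega


lemma weakLE_lamMax_iff {n d : ℕ} (hd : d < n + 1) (w : Equiv.Perm (Fin (n + 1))) :
    WeakLE w (lamMax (n + 1) d) ↔
    ∀ p q : Fin (n + 1), (p : ℕ) < (q : ℕ) →
      ((w q : Fin (n + 1)) : ℕ) < ((w p : Fin (n + 1)) : ℕ) →
      (((w q : Fin (n + 1)) : ℕ) < d ∧ d ≤ ((w p : Fin (n + 1)) : ℕ)) := by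
  constructor
  · intro h p q hpq hlt
    have hmem : (w q, w p) ∈ Inversions w := by
      refine ⟨Fin.lt_def.2 hlt, ?_⟩
      simp only [Equiv.symm_apply_apply]
      exact Fin.lt_def.2 hpq
    have := h hmem
    rw [mem_inversions_lamMax hd] at this
    exact this
  · rintro h ⟨i, j⟩ ⟨hij, hji⟩
    rw [mem_inversions_lamMax hd]
    have e1 : w (w.symm i) = i := w.apply_symm_apply i
    have e2 : w (w.symm j) = j := w.apply_symm_apply j
    have := h (w.symm j) (w.symm i) (Fin.lt_def.1 hji)
      (by rw [e1, e2]; exact Fin.lt_def.1 hij)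
    rw [e1, e2] at this
    exact this

lemma IJI_iff_param {m d : ℕ} (hd1 : 1 ≤ d) (hd : d < m + 1) (w : Equiv.Perm (Fin (m + 1))) :
    IntervalJoinIrred (m + 1) d w ↔ ∃ a b : ℕ, a ≤ d - 1 ∧ d + 1 ≤ b ∧ b ≤ m + 1 ∧
      ∀ p : Fin (m + 1), ((w p : Fin (m + 1)) : ℕ) = Fab d a b (p : ℕ) := by
  rw [IJI_iff_descents, weakLE_lamMax_iff hd]
  constructor
  · rintro ⟨SH, ⟨⟨p0, q0⟩, ⟨hq0, hdesc⟩, huniq⟩⟩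
    apply core_forward hd1 hd w SH p0 q0 hq0 hdesc
    intro p q hq hlt
    have := huniq (p, q) ⟨hq, hlt⟩
    exact congrArg Prod.fst this
  · rintro ⟨a, b, ha, hb1, hb2, hw⟩
    obtain ⟨SH, hEx⟩ := core_backward hd1 hd ha hb1 hb2 w hw
    exact ⟨SH, hEx⟩

lemma Fab_inj {n d a1 b1 a2 b2 : ℕ} (hd1 : 1 ≤ d) (hdn : d < n)
    (ha1 : a1 ≤ d - 1) (hb11 : d + 1 ≤ b1) (hb12 : b1 ≤ n)
    (ha2 : a2 ≤ d - 1) (hb21 : d + 1 ≤ b2) (hb22 : b2 ≤ n)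
    (h : ∀ p, p < n → Fab d a1 b1 p = Fab d a2 b2 p) : a1 = a2 ∧ b1 = b2 := by
  have ha : a1 = a2 := by
    rcases lt_trichotomy a1 a2 with hlt | heq | hgt
    · have := h a1 (by omega)
      simp only [Fab] at this
      split_ifs at this <;> omega
    · exact heq
    · have := h a2 (by omega)
      simp only [Fab] at this
      split_ifs at this <;> omega
  subst ha
  refine ⟨rfl, ?_⟩
  rcases lt_trichotomy b1 b2 with hlt | heq | hgt
  · have := h b1 (by omega)
    simp only [Fab] at this
    split_ifs at this <;> omega
  · exact heq
  · have := h b2 (by omega)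
    simp only [Fab] at this
    split_ifs at this <;> omega

/-- Fix `1 ≤ d ≤ n - 1`. The join-irreducible elements of the interval of the right
weak order on `Sₙ` from the identity to `λ_max = (d+1)⋯n 1⋯d` are exactly the
permutations with one-line notation
`1 2 ⋯ a (d+1)(d+2) ⋯ b (a+1)(a+2) ⋯ d (b+1)(b+2) ⋯ n`
for `0 ≤ a ≤ d-1` and `d+1 ≤ b ≤ n`; in particular there are exactly `d (n - d)` of
them. -/
theorem stmt14 (n d : ℕ) (hd1 : 1 ≤ d) (hd : d ≤ n - 1) :
    (∀ w : Equiv.Perm (Fin n), IntervalJoinIrred n d w ↔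
      ∃ a b : ℕ, a ≤ d - 1 ∧ d + 1 ≤ b ∧ b ≤ n ∧
        oneLine w = List.range' 1 a ++ List.range' (d + 1) (b - d) ++
          List.range' (a + 1) (d - a) ++ List.range' (b + 1) (n - b)) ∧
    Nat.card {w : Equiv.Perm (Fin n) // IntervalJoinIrred n d w} = d * (n - d) := by
  
  obtain ⟨m, rfl⟩ : ∃ m, n = m + 1 := ⟨n - 1, by omega⟩
  have hd' : d < m + 1 := by omega
  have key : ∀ w : Equiv.Perm (Fin (m + 1)), IntervalJoinIrred (m + 1) d w ↔
      ∃ a b : ℕ, a ≤ d - 1 ∧ d + 1 ≤ b ∧ b ≤ m + 1 ∧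
        oneLine w = List.range' 1 a ++ List.range' (d + 1) (b - d) ++
          List.range' (a + 1) (d - a) ++ List.range' (b + 1) (m + 1 - b) := by
    intro w
    rw [IJI_iff_param hd1 hd' w]
    constructor
    · rintro ⟨a, b, ha, hb1, hb2, hw⟩
      refine ⟨a, b, ha, hb1, hb2, ?_⟩
      rw [list_eq hd1 hd' ha hb1 hb2]
      unfold oneLine
      rw [List.ofFn_inj]
      funext i
      rw [hw i]
    · rintro ⟨a, b, ha, hb1, hb2, hw⟩
      refine ⟨a, b, ha, hb1, hb2, ?_⟩
      rw [list_eq hd1 hd' ha hb1 hb2] at hw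
      unfold oneLine at hw
      rw [List.ofFn_inj] at hw
      intro p
      have := congrFun hw p
      omega
  refine ⟨key, ?_⟩
  have hbij : Function.Bijective (fun x : Fin d × Fin (m + 1 - d) =>
      (⟨wab (m + 1) d (x.1 : ℕ) (d + 1 + (x.2 : ℕ)) hd1 hd'
          (by have := x.1.isLt; omega) (by omega) (by have := x.2.isLt; omega),
        (IJI_iff_param hd1 hd' _).2 ⟨(x.1 : ℕ), d + 1 + (x.2 : ℕ),
          (by have := x.1.isLt; omega), (by omega), (by have := x.2.isLt; omega),
          fun p => rfl⟩⟩ : {w : Equiv.Perm (Fin (m + 1)) // IntervalJoinIrred (m + 1) d w})) := by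
    constructor
    · rintro ⟨x1, y1⟩ ⟨x2, y2⟩ hxy
      simp only [Subtype.mk.injEq] at hxy
      have hv : ∀ p : Fin (m + 1),
          Fab d (x1 : ℕ) (d + 1 + (y1 : ℕ)) (p : ℕ) = Fab d (x2 : ℕ) (d + 1 + (y2 : ℕ)) (p : ℕ) :=
        fun p => congrArg (fun u : Equiv.Perm (Fin (m + 1)) => ((u p : Fin (m + 1)) : ℕ)) hxy
      have hij := Fab_inj hd1 hd' (by have := x1.isLt; omega) (by omega) (by have := y1.isLt; omega)
        (by have := x2.isLt; omega) (by omega) (by have := y2.isLt; omega)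
        (fun p hp => hv ⟨p, hp⟩)
      have e1 : x1 = x2 := Fin.ext hij.1
      have e2 : y1 = y2 := Fin.ext (by omega)
      rw [e1, e2]
    · rintro ⟨w, hw⟩
      obtain ⟨a, b, ha, hb1, hb2, hval⟩ := (IJI_iff_param hd1 hd' w).1 hw
      refine ⟨(⟨a, by omega⟩, ⟨b - (d + 1), by omega⟩), ?_⟩
      apply Subtype.ext
      apply Equiv.ext
      intro p
      apply Fin.ext
      show Fab d a (d + 1 + (b - (d + 1))) (p : ℕ) = ((w p : Fin (m + 1)) : ℕ)
      rw [hval p]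
      have e : d + 1 + (b - (d + 1)) = b := by omega
      rw [e]
  have hcard := Nat.card_congr (Equiv.ofBijective _ hbij)
  rw [← hcard]
  simp [Nat.card_eq_fintype_card]
end

section
/- Let T be a rooted tree poset on {0,1,…,n} with root 0, and let T× be the forest poset on [n] obtained by deleting the root. Let Θ(T×) be the set of pairs (λ, ρ), where λ is a linear extension of T× (viewed as a permutation in S_n) and ρ is an ornamentation of T×, such that for every v ∈ [n] the elements of ρ(v) form a consecutive factor of λ. Order Θ(T×) as a subposet of the product of the weak order restricted to linear extensions of T× and the ornamentation lattice. Then Θ(T×) has a unique minimal element, namely (the identity-minimal linear extension, the ornamentation v ↦ {v}), and a unique maximal element. -/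
/-- `a` is covered by `x` in the partial order `P`. -/
def CovRel {α : Type*} (P : PartialOrder α) (a x : α) : Prop :=
  P.lt a x ∧ ∀ c, P.lt a c → P.lt c x → False

/-- `λ` is a linear extension of the forest poset `P` on `[n]`: whenever `x ≤_P y`,
the element `x` appears at an earlier position than `y` in one-line notation. -/
def IsLinExt {n : ℕ} (P : PartialOrder (Fin n)) (l : Equiv.Perm (Fin n)) : Prop :=
  ∀ x y : Fin n, P.le x y → l.symm x ≤ l.symm y

/-- `S` is an ornament of the forest poset `P` hung at `v`: a connected subset of the
forest whose minimum is `v`; connectivity of a subset of a forest containing its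
minimum `v` amounts to being closed under intermediate elements between `v` and any
member. -/
def OrnamentAt {n : ℕ} (P : PartialOrder (Fin n)) (v : Fin n) (S : Set (Fin n)) : Prop :=
  v ∈ S ∧ (∀ x ∈ S, P.le v x) ∧ ∀ x ∈ S, ∀ y : Fin n, P.le v y → P.le y x → y ∈ S

/-- An ornamentation of the forest poset `P`: each `v` is assigned an ornament hung at
`v`, and any two assigned ornaments are nested or disjoint. -/
def IsOrnamentation {n : ℕ} (P : PartialOrder (Fin n)) (ρ : Fin n → Set (Fin n)) : Prop :=
  (∀ v : Fin n, OrnamentAt P v (ρ v)) ∧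
    ∀ v w : Fin n, ρ v ⊆ ρ w ∨ ρ w ⊆ ρ v ∨ Disjoint (ρ v) (ρ w)

/-- Membership in `Θ(T×)`: pairs `(λ, ρ)` of a linear extension and an ornamentation
such that for every `v`, the elements of `ρ v` form a consecutive factor of the word
`λ` (they occupy a contiguous block of positions). -/
def ThetaMem {n : ℕ} (P : PartialOrder (Fin n))
    (p : Equiv.Perm (Fin n) × (Fin n → Set (Fin n))) : Prop :=
  IsLinExt P p.1 ∧ IsOrnamentation P p.2 ∧
    ∀ v : Fin n, ∃ i len : ℕ,
      p.2 v = {x : Fin n | i ≤ (p.1.symm x : ℕ) ∧ (p.1.symm x : ℕ) < i + len}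

/-- The partial order on `Θ(T×)`, induced from the product of the weak order on linear
extensions and the ornamentation lattice (pointwise containment). -/
def ThetaLE {n : ℕ} (p q : Equiv.Perm (Fin n) × (Fin n → Set (Fin n))) : Prop :=
  Inversions p.1 ⊆ Inversions q.1 ∧ ∀ v : Fin n, p.2 v ⊆ q.2 v


theorem inversions_injective {n : ℕ} : Function.Injective (Inversions (n := n)) := by
  intro u w h
  have hlt : ∀ a b, w.symm a < w.symm b → u.symm a < u.symm b := by
    intro a b hab
    have hne : a ≠ b := by rintro rfl; exact lt_irrefl _ hab
    rcases hne.lt_or_gt with hab' | hba'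
    · by_contra! hle
      have hinv : (a, b) ∈ Inversions u :=
        ⟨hab', hle.lt_of_ne (u.symm.injective.ne hne.symm)⟩
      rw [h] at hinv
      exact hinv.2.asymm hab
    · have hinv : (b, a) ∈ Inversions w := ⟨hba', hab⟩
      rw [← h] at hinv
      exact hinv.2
  have hmono : Monotone (u.symm ∘ w) := by
    refine StrictMono.monotone fun i j hij => hlt (w i) (w j) ?_
    simpa using hij
  have hcomp : u.symm ∘ u = u.symm ∘ w :=
    Tuple.unique_monotone (by simpa using monotone_id) hmono
  exact Equiv.ext fun i => u.symm.injective (congrFun hcomp i)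

theorem ThetaLE.antisymm {n : ℕ} {p q : Equiv.Perm (Fin n) × (Fin n → Set (Fin n))}
    (hpq : ThetaLE p q) (hqp : ThetaLE q p) : p = q :=
  Prod.ext (inversions_injective (hpq.1.antisymm hqp.1))
    (funext fun v => (hpq.2 v).antisymm (hqp.2 v))

theorem Fin.exists_eq_setOf_of_ordConnected {n : ℕ} {T : Set (Fin n)} (hT : T.OrdConnected) :
    ∃ i len : ℕ, T = {k : Fin n | i ≤ (k : ℕ) ∧ (k : ℕ) < i + len} := by
  classical
  rcases T.eq_empty_or_nonempty with rfl | hne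
  · exact ⟨0, 0, by ext; simp⟩
  have hne' : T.toFinset.Nonempty := Set.toFinset_nonempty.mpr hne
  set a := T.toFinset.min' hne'
  set b := T.toFinset.max' hne'
  have ha : a ∈ T := by simpa using T.toFinset.min'_mem hne'
  have hb : b ∈ T := by simpa using T.toFinset.max'_mem hne'
  refine ⟨a, b + 1 - a, Set.ext fun k => ⟨fun hk => ?_, fun hk => ?_⟩⟩
  · have hak : a ≤ k := T.toFinset.min'_le k (by simpa using hk)
    have hkb : k ≤ b := T.toFinset.le_max' k (by simpa using hk)
    simp only [Set.mem_ofPred_eq, Fin.le_def] at hak hkb ⊢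
    omega
  · simp only [Set.mem_ofPred_eq] at hk
    exact hT.out ha hb ⟨Fin.le_def.mpr hk.1, Fin.le_def.mpr (by omega)⟩

theorem exists_consecutive_of_convex {n : ℕ} (σ : Equiv.Perm (Fin n)) {S : Set (Fin n)}
    (hS : ∀ x ∈ S, ∀ y ∈ S, ∀ z, σ.symm x ≤ σ.symm z → σ.symm z ≤ σ.symm y → z ∈ S) :
    ∃ i len : ℕ, S = {x : Fin n | i ≤ (σ.symm x : ℕ) ∧ (σ.symm x : ℕ) < i + len} := by
  have hconn : (σ.symm '' S).OrdConnected := by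
    refine ⟨?_⟩
    rintro _ ⟨x, hx, rfl⟩ _ ⟨y, hy, rfl⟩ k ⟨hxk, hky⟩
    refine ⟨σ k, hS x hx y hy (σ k) ?_ ?_, σ.symm_apply_apply k⟩ <;> simpa
  obtain ⟨i, len, h⟩ := Fin.exists_eq_setOf_of_ordConnected hconn
  exact ⟨i, len, Set.ext fun x => by rw [← σ.symm.injective.mem_set_image, h]; rfl⟩

theorem isOrnamentation_singleton {n : ℕ} (P : PartialOrder (Fin n)) :
    IsOrnamentation P (fun v => {v}) := by
  refine ⟨fun v => ⟨rfl, ?_, ?_⟩, fun v w => ?_⟩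
  · rintro x rfl
    exact P.le_refl x
  · rintro x rfl y hvy hyx
    exact P.le_antisymm _ _ hyx hvy
  · by_cases h : v = w
    · exact Or.inl (by rw [h])
    · exact Or.inr (Or.inr (Set.disjoint_singleton.mpr h))

theorem thetaLE_refl_singleton {n : ℕ} {P : PartialOrder (Fin n)}
    {p : Equiv.Perm (Fin n) × (Fin n → Set (Fin n))} (hp : ThetaMem P p) :
    ThetaLE (Equiv.refl (Fin n), fun v => {v}) p := by
  refine ⟨?_, fun v => Set.singleton_subset_iff.mpr (hp.2.1.1 v).1⟩
  rintro ⟨a, b⟩ ⟨hab, hba⟩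
  exact (Nat.lt_asymm hab hba).elim

section Keys

variable {n : ℕ}

def maxKey (m : Fin n → Fin n) (x : Fin n) : (Fin n)ᵒᵈ ×ₗ Fin n :=
  toLex (OrderDual.toDual (m x), x)

theorem maxKey_le_maxKey_iff (m : Fin n → Fin n) (x y : Fin n) :
    maxKey m x ≤ maxKey m y ↔ m y < m x ∨ m x = m y ∧ x ≤ y := by
  simp [maxKey, Prod.Lex.toLex_le_toLex]

theorem maxKey_injective (m : Fin n → Fin n) : Function.Injective (maxKey m) :=
  fun _ _ h => congrArg (fun k => (ofLex k).2) h

noncomputable def maxExt (m : Fin n → Fin n) : Equiv.Perm (Fin n) :=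
  Tuple.sort (maxKey m)

theorem maxExt_symm_le_iff (m : Fin n → Fin n) (x y : Fin n) :
    (maxExt m).symm x ≤ (maxExt m).symm y ↔ maxKey m x ≤ maxKey m y := by
  have hmono : StrictMono (maxKey m ∘ maxExt m) :=
    (Tuple.monotone_sort _).strictMono_of_injective
      ((maxKey_injective m).comp (Equiv.injective _))
  simpa using (hmono.le_iff_le (a := (maxExt m).symm x) (b := (maxExt m).symm y)).symm

end Keys

section UpperEnd

variable {n : ℕ} {P : PartialOrder (Fin n)} {m : Fin n → Fin n}

theorem exists_upperEnd (hpre : ∀ v : Fin n, ∃ s : ℕ,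
      {x : Fin n | P.le v x} = {x : Fin n | (v : ℕ) ≤ (x : ℕ) ∧ (x : ℕ) < (v : ℕ) + s}) :
    ∃ m : Fin n → Fin n, ∀ v x, P.le v x ↔ v ≤ x ∧ x ≤ m v := by
  choose s hs using hpre
  have hmem (v x : Fin n) : P.le v x ↔ (v : ℕ) ≤ x ∧ (x : ℕ) < v + s v :=
    Set.ext_iff.mp (hs v) x
  refine ⟨fun v => ⟨min (v + s v - 1) (n - 1), by omega⟩, fun v x => ?_⟩
  have hv := (hmem v v).mp (P.le_refl v)
  rw [hmem, Fin.le_def, Fin.le_def]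
  dsimp only
  omega

theorem self_le_upperEnd (hm : ∀ v x, P.le v x ↔ v ≤ x ∧ x ≤ m v) (v : Fin n) : v ≤ m v :=
  ((hm v v).mp (P.le_refl v)).2

theorem upperEnd_le_upperEnd (hm : ∀ v x, P.le v x ↔ v ≤ x ∧ x ≤ m v) {x y : Fin n}
    (h : P.le x y) : m y ≤ m x :=
  ((hm x (m y)).mp (P.le_trans _ _ _ h ((hm y (m y)).mpr ⟨self_le_upperEnd hm y, Fin.le_refl _⟩))).2

theorem le_total_of_le_of_le (hm : ∀ v x, P.le v x ↔ v ≤ x ∧ x ≤ m v) {v w z : Fin n}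
    (hvz : P.le v z) (hwz : P.le w z) : P.le v w ∨ P.le w v := by
  simp only [hm] at hvz hwz ⊢
  omega

theorem isOrnamentation_setOf_le (hm : ∀ v x, P.le v x ↔ v ≤ x ∧ x ≤ m v) :
    IsOrnamentation P (fun v => {x | P.le v x}) := by
  refine ⟨fun v => ⟨P.le_refl v, fun x hx => hx, fun x _ y hvy _ => hvy⟩, fun v w => ?_⟩
  by_cases hd : Disjoint {x | P.le v x} {x | P.le w x}
  · exact Or.inr (Or.inr hd)
  obtain ⟨z, hvz, hwz⟩ := Set.not_disjoint_iff.mp hd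
  rcases le_total_of_le_of_le hm hvz hwz with hvw | hwv
  · exact Or.inr (Or.inl fun x hx => P.le_trans _ _ _ hvw hx)
  · exact Or.inl fun x hx => P.le_trans _ _ _ hwv hx

theorem thetaMem_refl_singleton (hm : ∀ v x, P.le v x ↔ v ≤ x ∧ x ≤ m v) :
    ThetaMem P (Equiv.refl (Fin n), fun v => {v}) := by
  refine ⟨fun x y h => ((hm x y).mp h).1, isOrnamentation_singleton P, fun v => ⟨v, 1, ?_⟩⟩
  ext x
  simp only [Set.mem_singleton_iff, Set.mem_ofPred_eq, Equiv.refl_symm, Equiv.refl_apply]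
  omega

theorem maxKey_le_maxKey_of_le (hm : ∀ v x, P.le v x ↔ v ≤ x ∧ x ≤ m v) {x y : Fin n}
    (h : P.le x y) : maxKey m x ≤ maxKey m y := by
  have hxy := ((hm x y).mp h).1
  have hmyx := upperEnd_le_upperEnd hm h
  rw [maxKey_le_maxKey_iff]
  -- `omega` would misread `h : P.le x y` as an inequality in `Fin n`
  clear h
  omega

theorem maxKey_lt_maxKey_of_not_le (hm : ∀ v x, P.le v x ↔ v ≤ x ∧ x ≤ m v) {x y : Fin n}
    (hxy : x < y) (h : ¬ P.le x y) : maxKey m y < maxKey m x := by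
  have hy := self_le_upperEnd hm y
  rw [hm] at h
  rw [lt_iff_not_ge, maxKey_le_maxKey_iff]
  omega

theorem le_of_maxKey_le_of_le (hm : ∀ v x, P.le v x ↔ v ≤ x ∧ x ≤ m v) {v x y z : Fin n}
    (hx : P.le v x) (hy : P.le v y)
    (hxz : maxKey m x ≤ maxKey m z) (hzy : maxKey m z ≤ maxKey m y) : P.le v z := by
  have hmx := upperEnd_le_upperEnd hm hx
  have hz := self_le_upperEnd hm z
  have hmy := self_le_upperEnd hm y
  rw [maxKey_le_maxKey_iff] at hxz hzy
  rw [hm] at hx hy ⊢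
  by_cases hzv : z ≤ v ∧ v ≤ m z
  · have hmzv := upperEnd_le_upperEnd hm ((hm z v).mpr hzv)
    omega
  · omega

theorem thetaMem_maxExt (hm : ∀ v x, P.le v x ↔ v ≤ x ∧ x ≤ m v) :
    ThetaMem P (maxExt m, fun v => {x | P.le v x}) := by
  refine ⟨fun x y h => ?_, isOrnamentation_setOf_le hm, fun v => ?_⟩
  · exact (maxExt_symm_le_iff m x y).mpr (maxKey_le_maxKey_of_le hm h)
  · refine exists_consecutive_of_convex _ fun x hx y hy z hxz hzy => ?_
    rw [maxExt_symm_le_iff] at hxz hzy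
    exact le_of_maxKey_le_of_le hm hx hy hxz hzy

theorem thetaLE_maxExt (hm : ∀ v x, P.le v x ↔ v ≤ x ∧ x ≤ m v)
    {p : Equiv.Perm (Fin n) × (Fin n → Set (Fin n))} (hp : ThetaMem P p) :
    ThetaLE p (maxExt m, fun v => {x | P.le v x}) := by
  refine ⟨?_, fun v x hx => (hp.2.1.1 v).2.1 x hx⟩
  rintro ⟨a, b⟩ ⟨hab, hba⟩
  have hnle : ¬ P.le a b := fun h => absurd (hp.1 a b h) (not_le.mpr hba)
  refine ⟨hab, ?_⟩
  by_contra! hle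
  rw [maxExt_symm_le_iff] at hle
  exact absurd hle (not_le.mpr (maxKey_lt_maxKey_of_not_le hm hab hnle))

end UpperEnd

theorem stmt18_general (n : ℕ) (P : PartialOrder (Fin n))
    (hpre : ∀ v : Fin n, ∃ s : ℕ,
      {x : Fin n | P.le v x} = {x : Fin n | (v : ℕ) ≤ (x : ℕ) ∧ (x : ℕ) < (v : ℕ) + s}) :
    (ThetaMem P (Equiv.refl (Fin n), fun v => {v}) ∧
      ∀ p, ThetaMem P p → ThetaLE (Equiv.refl (Fin n), fun v => {v}) p) ∧
    (∃! q, ThetaMem P q ∧ ∀ p, ThetaMem P p → ThetaLE p q) := by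
  obtain ⟨m, hm⟩ := exists_upperEnd hpre
  refine ⟨⟨thetaMem_refl_singleton hm, fun p hp => thetaLE_refl_singleton hp⟩,
    (maxExt m, fun v => {x | P.le v x}), ⟨thetaMem_maxExt hm, fun p hp => thetaLE_maxExt hm hp⟩,
    fun q hq => ThetaLE.antisymm (thetaLE_maxExt hm hq.1) (hq.2 _ (thetaMem_maxExt hm))⟩

/-- Let `T` be a rooted plane tree on `{0, 1, …, n}` whose preorder traversal is
`0, 1, …, n`, and let `T×` be the forest poset on `[n]` obtained by deleting the root;
thus `T×` is a forest poset (`hforest`), naturally labeled (`hnat`), in which the set of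
elements above any `v` is a consecutive block starting at `v` (`hpre`, the preorder
property). Then the poset `Θ(T×)` has a unique minimal element, namely the pair
(identity permutation, singleton ornamentation `v ↦ {v}`), which is in fact its
minimum, and it has a unique maximal element (a maximum). -/
theorem stmt18 (n : ℕ) (P : PartialOrder (Fin n))
    (hforest : ∀ x a b : Fin n, CovRel P a x → CovRel P b x → a = b)
    (hnat : ∀ x y : Fin n, P.le x y → x ≤ y)
    (hpre : ∀ v : Fin n, ∃ s : ℕ,
      {x : Fin n | P.le v x} = {x : Fin n | (v : ℕ) ≤ (x : ℕ) ∧ (x : ℕ) < (v : ℕ) + s}) :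
    (ThetaMem P (Equiv.refl (Fin n), fun v => {v}) ∧
      ∀ p, ThetaMem P p → ThetaLE (Equiv.refl (Fin n), fun v => {v}) p) ∧
    (∃! q, ThetaMem P q ∧ ∀ p, ThetaMem P p → ThetaLE p q) :=
  stmt18_general n P hpre
end
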